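/- arXiv:1106.1850 — 2 statements merged into one kernel-verified Lean document; each statement's English description precedes it below -/
import Mathlib

section
/- Let A be a timed automaton and 𝔞 a sound, complete, lift-safe finite abstraction. Then A has a Zeno run if and only if the slow zone graph SZG^𝔞(A) contains an infinite slow path; moreover the number of reachable nodes of SZG^𝔞(A) is at most twice the number of reachable nodes of ZG^𝔞(A). -/
/-! ## Timed automata -/

/-- Comparison operators appearing in clock constraints. -/
inductive Cmp : Type
  | lt | le | eq | ge | gt

/-- Semantics of a comparison on reals. -/
def Cmp.holds : Cmp → ℝ → ℝ → Prop
  | .lt, a, b => a < b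
  | .le, a, b => a ≤ b
  | .eq, a, b => a = b
  | .ge, a, b => a ≥ b
  | .gt, a, b => a > b

/-- An atomic clock constraint `x # c` with `c ∈ ℕ`. -/
structure ClockConstraint (C : Type) where
  clock : C
  cmp : Cmp
  bound : ℕ

/-- A guard is a finite conjunction of atomic clock constraints. -/
abbrev Guard (C : Type) := List (ClockConstraint C)

/-- A clock valuation. -/
abbrev Val (C : Type) := C → NNReal

/-- Satisfaction of a guard by a valuation. -/
def GSat {C : Type} (v : Val C) (g : Guard C) : Prop :=
  ∀ cc ∈ g, cc.cmp.holds (v cc.clock : ℝ) (cc.bound : ℝ)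

/-- A transition `(q, g, R, q')` of a timed automaton. -/
structure Transition (Q C : Type) where
  src : Q
  guard : Guard C
  reset : Set C
  tgt : Q

/-- A timed automaton: initial state and a finite set of transitions. -/
structure TA (Q C : Type) where
  init : Q
  trans : Set (Transition Q C)
  finite_trans : trans.Finite

/-- An infinite run of a timed automaton: alternating delay and action transitions,
starting in the initial state with all clocks at `0`. -/
structure TARun {Q C : Type} (A : TA Q C) where
  st : ℕ → Q
  val : ℕ → Val C
  del : ℕ → NNReal
  tr : ℕ → Transition Q C
  init_st : st 0 = A.init
  init_val : ∀ x, val 0 x = 0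
  mem : ∀ i, tr i ∈ A.trans
  src_eq : ∀ i, (tr i).src = st i
  tgt_eq : ∀ i, (tr i).tgt = st (i + 1)
  guard_sat : ∀ i, GSat (fun x => val i x + del i) (tr i).guard
  reset_eq : ∀ i, ∀ x ∈ (tr i).reset, val (i + 1) x = 0
  unreset_eq : ∀ i, ∀ x ∉ (tr i).reset, val (i + 1) x = val i x + del i

/-- A run is Zeno if the total elapsed time is bounded. -/
def TARun.Zeno {Q C : Type} {A : TA Q C} (ρ : TARun A) : Prop :=
  ∃ c : ℝ, ∀ n : ℕ, ∑ i ∈ Finset.range n, (ρ.del i : ℝ) ≤ c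

def HasNonZenoRun {Q C : Type} (A : TA Q C) : Prop := ∃ ρ : TARun A, ¬ ρ.Zeno

def HasZenoRun {Q C : Type} (A : TA Q C) : Prop := ∃ ρ : TARun A, ρ.Zeno

/-! ## Zones and zone graphs -/

/-- Atomic zone constraints `x ~ c` and `x − y ~ c` with `c ∈ ℤ`. -/
inductive ZoneConstraint (C : Type) : Type
  | single (x : C) (cmp : Cmp) (c : ℤ)
  | diff (x y : C) (cmp : Cmp) (c : ℤ)

def ZoneConstraint.sat {C : Type} (v : Val C) : ZoneConstraint C → Prop
  | .single x cmp c => cmp.holds (v x : ℝ) (c : ℝ)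
  | .diff x y cmp c => cmp.holds ((v x : ℝ) - (v y : ℝ)) (c : ℝ)

/-- A zone is a set of valuations definable by finitely many zone constraints. -/
def IsZone {C : Type} (Z : Set (Val C)) : Prop :=
  ∃ l : List (ZoneConstraint C), Z = { v | ∀ cc ∈ l, cc.sat v }

/-- The initial zone `Z₀ = { v₀ + δ | δ ≥ 0 }`. -/
def ZoneInit (C : Type) : Set (Val C) := { v | ∃ δ : NNReal, ∀ x, v x = δ }

/-- Successor zone along a transition: guard, then reset, then time elapse. -/
def post {Q C : Type} (t : Transition Q C) (Z : Set (Val C)) : Set (Val C) :=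
  { v' | ∃ v ∈ Z, ∃ δ : NNReal, GSat v t.guard ∧
      (∀ x ∈ t.reset, v' x = δ) ∧ (∀ x ∉ t.reset, v' x = v x + δ) }

/-- An abstraction operator on sets of valuations. -/
abbrev Abstr (C : Type) := Set (Val C) → Set (Val C)

/-- A finite abstraction: maps zones to zones, is extensive and idempotent on zones,
and has finite range on zones. -/
def IsFiniteAbstraction {C : Type} (𝔞 : Abstr C) : Prop :=
  (∀ Z : Set (Val C), IsZone Z → IsZone (𝔞 Z) ∧ Z ⊆ 𝔞 Z ∧ 𝔞 (𝔞 Z) = 𝔞 Z) ∧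
  { W : Set (Val C) | ∃ Z, IsZone Z ∧ 𝔞 Z = W }.Finite

/-- Edge of the (unabstracted) zone graph `ZG(A)`. -/
def ZGEdge {Q C : Type} (A : TA Q C) (s s' : Q × Set (Val C)) : Prop :=
  ∃ t ∈ A.trans, t.src = s.1 ∧ t.tgt = s'.1 ∧ (post t s.2).Nonempty ∧ s'.2 = post t s.2

/-- Reachability in the zone graph `ZG(A)` from the initial node. -/
def ZGReach {Q C : Type} (A : TA Q C) (s : Q × Set (Val C)) : Prop :=
  Relation.ReflTransGen (ZGEdge A) (A.init, ZoneInit C) s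

/-- Edge of the abstract zone graph `ZG^𝔞(A)`. -/
def AZGEdge {Q C : Type} (A : TA Q C) (𝔞 : Abstr C)
    (s : Q × Set (Val C)) (t : Transition Q C) (s' : Q × Set (Val C)) : Prop :=
  𝔞 s.2 = s.2 ∧ t ∈ A.trans ∧ t.src = s.1 ∧ t.tgt = s'.1 ∧
    (post t s.2).Nonempty ∧ s'.2 = 𝔞 (post t s.2)

/-- Reachability in the abstract zone graph `ZG^𝔞(A)` from the initial node. -/
def AZGReach {Q C : Type} (A : TA Q C) (𝔞 : Abstr C) (s : Q × Set (Val C)) : Prop :=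
  Relation.ReflTransGen (fun a b => ∃ t, AZGEdge A 𝔞 a t b) (A.init, 𝔞 (ZoneInit C)) s

/-- An infinite path of the abstract zone graph starting at the initial node. -/
structure AZGPath {Q C : Type} (A : TA Q C) (𝔞 : Abstr C) where
  node : ℕ → Q × Set (Val C)
  tr : ℕ → Transition Q C
  init_node : node 0 = (A.init, 𝔞 (ZoneInit C))
  step : ∀ i, AZGEdge A 𝔞 (node i) (tr i) (node (i + 1))

/-- A run instantiates a path: same transitions, matching states, valuations in zones. -/
def Instantiates {Q C : Type} {A : TA Q C} {𝔞 : Abstr C}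
    (ρ : TARun A) (π : AZGPath A 𝔞) : Prop :=
  (∀ i, ρ.tr i = π.tr i) ∧ ∀ i, (π.node i).1 = ρ.st i ∧ ρ.val i ∈ (π.node i).2

/-- Soundness: every infinite path of `ZG^𝔞(A)` can be instantiated as a run of `A`. -/
def SoundAbs {Q C : Type} (A : TA Q C) (𝔞 : Abstr C) : Prop :=
  ∀ π : AZGPath A 𝔞, ∃ ρ : TARun A, Instantiates ρ π

/-- Completeness: every run of `A` is an instance of some path of `ZG^𝔞(A)`. -/
def CompleteAbs {Q C : Type} (A : TA Q C) (𝔞 : Abstr C) : Prop :=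
  ∀ ρ : TARun A, ∃ π : AZGPath A 𝔞, Instantiates ρ π

/-! ## Relevant clocks, reduced guessing zone graph -/

/-- Relevant clocks: those checked for `x ≤ 0` or `x = 0` in some guard. -/
def Rl {Q C : Type} (A : TA Q C) : Set C :=
  { x | ∃ t ∈ A.trans, ∃ cc ∈ t.guard,
      cc.clock = x ∧ cc.bound = 0 ∧ (cc.cmp = Cmp.le ∨ cc.cmp = Cmp.eq) }

/-- Clocks that can be `0` in some valuation of `Z`. -/
def C0 {C : Type} (Z : Set (Val C)) : Set C := { x | ∃ v ∈ Z, v x = 0 }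

/-- Edge of the reduced guessing zone graph; `none` labels the `τ`-transitions. -/
def RGZGEdge {Q C : Type} (A : TA Q C) (𝔞 : Abstr C)
    (s : Q × Set (Val C) × Set C) (l : Option (Transition Q C))
    (s' : Q × Set (Val C) × Set C) : Prop :=
  match l with
  | some t =>
      AZGEdge A 𝔞 (s.1, s.2.1) t (s'.1, s'.2.1) ∧
      (∃ v ∈ s.2.1, GSat v t.guard ∧ ∀ x ∈ Rl A \ s.2.2, 0 < v x) ∧
      s'.2.2 = (s.2.2 ∪ t.reset) ∩ Rl A ∩ C0 s'.2.1
  | none => s'.1 = s.1 ∧ s'.2.1 = s.2.1 ∧ (s'.2.2 = ∅ ∨ s'.2.2 = s.2.2)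

/-- Reachability in `RGZG^𝔞(A)` from the initial node `(q₀, 𝔞(Z₀), Rl(A))`. -/
def RGZGReach {Q C : Type} (A : TA Q C) (𝔞 : Abstr C)
    (s : Q × Set (Val C) × Set C) : Prop :=
  Relation.ReflTransGen (fun a b => ∃ l, RGZGEdge A 𝔞 a l b)
    (A.init, 𝔞 (ZoneInit C), Rl A) s

/-- An infinite path of `RGZG^𝔞(A)` starting at the initial node. -/
structure RGZGPath {Q C : Type} (A : TA Q C) (𝔞 : Abstr C) where
  node : ℕ → Q × Set (Val C) × Set C
  lbl : ℕ → Option (Transition Q C)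
  init_node : node 0 = (A.init, 𝔞 (ZoneInit C), Rl A)
  step : ∀ i, RGZGEdge A 𝔞 (node i) (lbl i) (node (i + 1))

/-- A clock is bounded in a guard if the guard implies `x ≤ c` for some constant `c`. -/
def ClockBounded {C : Type} (x : C) (g : Guard C) : Prop :=
  ∃ c : ℝ, ∀ v : Val C, GSat v g → (v x : ℝ) ≤ c

/-- A blocked path: some clock is bounded infinitely often but reset only finitely often. -/
def RGZGPath.Blocked {Q C : Type} {A : TA Q C} {𝔞 : Abstr C} (π : RGZGPath A 𝔞) : Prop :=
  ∃ x : C,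
    { i | ∃ t, π.lbl i = some t ∧ ClockBounded x t.guard }.Infinite ∧
    { i | ∃ t, π.lbl i = some t ∧ x ∈ t.reset }.Finite

def RGZGPath.Unblocked {Q C : Type} {A : TA Q C} {𝔞 : Abstr C} (π : RGZGPath A 𝔞) : Prop :=
  ¬ π.Blocked

/-- The path visits a clear node (empty guess set) infinitely often. -/
def RGZGPath.ClearInfOften {Q C : Type} {A : TA Q C} {𝔞 : Abstr C} (π : RGZGPath A 𝔞) : Prop :=
  ∀ n : ℕ, ∃ m, n ≤ m ∧ (π.node m).2.2 = (∅ : Set C)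

/-- `𝔞` weakly preserves orders (w.r.t. the automaton `A`). -/
def WeaklyPreservesOrders {Q C : Type} (A : TA Q C) (𝔞 : Abstr C) : Prop :=
  ∀ Z : Set (Val C), IsZone Z → ∀ x y : C,
    x ∈ Rl A ∩ C0 Z → y ∈ Rl A ∩ C0 Z →
    ((∀ v ∈ Z, v x ≤ v y) ↔ ∀ v ∈ 𝔞 Z, v x ≤ v y)

/-! ## Lifted clocks, slow zone graph -/

/-- Clocks `x` such that some guard of `A` implies `x ≥ 1`. -/
def Lf {Q C : Type} (A : TA Q C) : Set C :=
  { x | ∃ t ∈ A.trans, ∀ v : Val C, GSat v t.guard → 1 ≤ (v x : ℝ) }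

/-- Lift-safe abstraction. -/
def LiftSafe {Q C : Type} (A : TA Q C) (𝔞 : Abstr C) : Prop :=
  ∀ Z : Set (Val C), IsZone Z → ∀ x ∈ Lf A,
    ((∀ v ∈ Z, 1 ≤ (v x : ℝ)) ↔ ∀ v ∈ 𝔞 Z, 1 ≤ (v x : ℝ))

/-- Edge of the slow zone graph; the Boolean is `true` on slow nodes,
`none` labels the `τ`-transitions from free to slow. -/
def SZGEdge {Q C : Type} (A : TA Q C) (𝔞 : Abstr C)
    (s : Q × Set (Val C) × Bool) (l : Option (Transition Q C))
    (s' : Q × Set (Val C) × Bool) : Prop :=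
  match l with
  | some t =>
      AZGEdge A 𝔞 (s.1, s.2.1) t (s'.1, s'.2.1) ∧ s'.2.2 = s.2.2 ∧
      (s.2.2 = true → ∀ x ∈ t.reset, ∃ v ∈ s.2.1, GSat v t.guard ∧ (v x : ℝ) < 1)
  | none => s.2.2 = false ∧ s'.1 = s.1 ∧ s'.2.1 = s.2.1 ∧ s'.2.2 = true

/-- Reachability in `SZG^𝔞(A)` from the initial node `(q₀, 𝔞(Z₀), free)`. -/
def SZGReach {Q C : Type} (A : TA Q C) (𝔞 : Abstr C)
    (s : Q × Set (Val C) × Bool) : Prop :=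
  Relation.ReflTransGen (fun a b => ∃ l, SZGEdge A 𝔞 a l b)
    (A.init, 𝔞 (ZoneInit C), false) s

/-- An infinite path of `SZG^𝔞(A)` starting at the initial node. -/
structure SZGPath {Q C : Type} (A : TA Q C) (𝔞 : Abstr C) where
  node : ℕ → Q × Set (Val C) × Bool
  lbl : ℕ → Option (Transition Q C)
  init_node : node 0 = (A.init, 𝔞 (ZoneInit C), false)
  step : ∀ i, SZGEdge A 𝔞 (node i) (lbl i) (node (i + 1))

/-- A slow path: some suffix consists entirely of slow nodes. -/
def SZGPath.Slow {Q C : Type} {A : TA Q C} {𝔞 : Abstr C} (π : SZGPath A 𝔞) : Prop :=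
  ∃ N, ∀ i, N ≤ i → (π.node i).2.2 = true

/-! ## DBMs and LU-extrapolations -/

/-- A DBM entry: `∞` or a bound `(c, <)` / `(c, ≤)`. -/
inductive DBMEntry : Type
  | inf
  | bnd (c : ℤ) (strict : Bool)

/-- A real `d` satisfies a DBM entry. -/
def DBMEntry.sat (d : ℝ) : DBMEntry → Prop
  | .inf => True
  | .bnd c true => d < (c : ℝ)
  | .bnd c false => d ≤ (c : ℝ)

/-- A DBM over clocks `C`; `none` is the special clock `x₀` with value `0`. -/
abbrev DBM (C : Type) := Option C → Option C → DBMEntry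

/-- Extend a valuation with the special clock `x₀ = 0`. -/
def ext0 {C : Type} (v : Val C) : Option C → ℝ
  | none => 0
  | some x => (v x : ℝ)

/-- The zone described by a DBM. -/
def dbmZone {C : Type} (M : DBM C) : Set (Val C) :=
  { v | ∀ i j, (M i j).sat (ext0 v i - ext0 v j) }

/-- `M` is the canonical DBM of the nonempty zone `Z`: it defines `Z` and each of
its entries is the tightest constraint satisfied by all valuations of `Z`. -/
def IsCanonicalDBM {C : Type} (Z : Set (Val C)) (M : DBM C) : Prop :=
  Z.Nonempty ∧ dbmZone M = Z ∧
  ∀ i j : Option C, ∀ e : DBMEntry,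
    (∀ v ∈ Z, e.sat (ext0 v i - ext0 v j)) →
    ∀ d : ℝ, (M i j).sat d → e.sat d

/-- A bound in `ℕ ∪ {−∞}` (represented with integer values). -/
inductive ExtBound : Type
  | minf
  | fin (n : ℤ)

def ExtBound.max : ExtBound → ExtBound → ExtBound
  | .minf, b => b
  | .fin a, .minf => .fin a
  | .fin a, .fin b => .fin (a ⊔ b)

/-- Is `c_{ij} > b`? (`c_{ij}` the value of a DBM entry, possibly `∞`). -/
def entryGtB : DBMEntry → ExtBound → Bool
  | .inf, _ => true
  | .bnd _ _, .minf => true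
  | .bnd c _, .fin l => decide (l < c)

/-- Is `−c_{ij} > b`? (`−∞` when the entry is `∞`). -/
def negGtB : DBMEntry → ExtBound → Bool
  | .inf, _ => false
  | .bnd _ _, .minf => true
  | .bnd c _, .fin u => decide (u < -c)

/-- The entry `(−U(x), <)` (which is `(∞, <)` when `U(x) = −∞`). -/
def negUB : ExtBound → DBMEntry
  | .minf => .inf
  | .fin u => .bnd (-u) true

/-- Extend a bound function to the special clock `x₀`, with bound `0`. -/
def extendB {C : Type} (f : C → ExtBound) : Option C → ExtBound
  | none => .fin 0
  | some x => f x

/-- The `Extra_LU` extrapolation of a (canonical) DBM. -/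
def extraLU {C : Type} (L U : C → ExtBound) (M : DBM C) : DBM C := fun i j =>
  if entryGtB (M i j) (extendB L i) then DBMEntry.inf
  else if negGtB (M i j) (extendB U j) then negUB (extendB U j)
  else M i j

/-- The `Extra⁺_LU` extrapolation of a (canonical) DBM. -/
def extraLUp {C : Type} (L U : C → ExtBound) (M : DBM C) : DBM C := fun i j =>
  if entryGtB (M i j) (extendB L i) then DBMEntry.inf
  else if negGtB (M none i) (extendB L i) then DBMEntry.inf
  else if negGtB (M none j) (extendB U j) && i.isSome then DBMEntry.inf
  else if negGtB (M none j) (extendB U j) then negUB (extendB U j)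
  else M i j

/-- Constants `c` occurring in lower-bound guards `x > c` or `x ≥ c` of `A`. -/
def LowerConsts {Q C : Type} (A : TA Q C) (x : C) : Set ℕ :=
  { c | ∃ t ∈ A.trans, ∃ cc ∈ t.guard,
      cc.clock = x ∧ cc.bound = c ∧ (cc.cmp = Cmp.gt ∨ cc.cmp = Cmp.ge) }

/-- Constants `c` occurring in upper-bound guards `x < c` or `x ≤ c` of `A`. -/
def UpperConsts {Q C : Type} (A : TA Q C) (x : C) : Set ℕ :=
  { c | ∃ t ∈ A.trans, ∃ cc ∈ t.guard,
      cc.clock = x ∧ cc.bound = c ∧ (cc.cmp = Cmp.lt ∨ cc.cmp = Cmp.le) }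

/-- `b` is the maximum of `S` (and `−∞` when `S` is empty). -/
def IsBoundOf (S : Set ℕ) (b : ExtBound) : Prop :=
  (S = ∅ ∧ b = ExtBound.minf) ∨
  (∃ c ∈ S, b = ExtBound.fin (c : ℤ) ∧ ∀ c' ∈ S, c' ≤ c)

/-- `L` is the lower-bound function derived from `A`. -/
def IsLFun {Q C : Type} (A : TA Q C) (L : C → ExtBound) : Prop :=
  ∀ x, IsBoundOf (LowerConsts A x) (L x)

/-- `U` is the upper-bound function derived from `A`. -/
def IsUFun {Q C : Type} (A : TA Q C) (U : C → ExtBound) : Prop :=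
  ∀ x, IsBoundOf (UpperConsts A x) (U x)

/-! ## The automata `A^NZ_φ` and `A^Z_φ` built from a 3CNF formula -/

/-- A literal: a propositional variable together with its polarity.
Also used as clock type: `(i, true)` is `xᵢ` and `(i, false)` is `x̄ᵢ`. -/
abbrev Lit (k : ℕ) := Fin k × Bool

/-- States `q₀, …, q_k, r₀, …, r_n`. -/
abbrev CNFState (k n : ℕ) := Fin (k + 1) ⊕ Fin (n + 1)

/-- A 3CNF formula with `n` clauses over `k` variables is satisfiable. -/
def Sat3 {k n : ℕ} (φ : Fin n → Fin 3 → Lit k) : Prop :=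
  ∃ χ : Fin k → Bool, ∀ m : Fin n, ∃ j : Fin 3, χ (φ m j).1 = (φ m j).2

/-- The transitions of `A^NZ_φ`. -/
def anzTrans (k n : ℕ) (φ : Fin n → Fin 3 → Lit k) :
    (Fin k × Bool) ⊕ ((Fin n × Fin 3) ⊕ Bool) → Transition (CNFState k n) (Lit k)
  | Sum.inl (i, b) =>
      ⟨Sum.inl i.castSucc, [], {(i, b)}, Sum.inl i.succ⟩
  | Sum.inr (Sum.inl (m, j)) =>
      ⟨Sum.inr m.castSucc, [⟨φ m j, Cmp.le, 0⟩], ∅, Sum.inr m.succ⟩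
  | Sum.inr (Sum.inr true) =>
      ⟨Sum.inl (Fin.last k), [], ∅, Sum.inr 0⟩
  | Sum.inr (Sum.inr false) =>
      ⟨Sum.inr (Fin.last n), [], ∅, Sum.inl 0⟩

/-- The automaton `A^NZ_φ` (zero-checks `cl(ℓ) ≤ 0` on the clause transitions). -/
def ANZ (k n : ℕ) (φ : Fin n → Fin 3 → Lit k) : TA (CNFState k n) (Lit k) :=
  ⟨Sum.inl 0, Set.range (anzTrans k n φ), Set.finite_range _⟩

/-- The transitions of `A^Z_φ`. -/
def azTrans (k n : ℕ) (φ : Fin n → Fin 3 → Lit k) :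
    (Fin k × Bool) ⊕ ((Fin n × Fin 3) ⊕ Bool) → Transition (CNFState k n) (Lit k)
  | Sum.inl (i, b) =>
      ⟨Sum.inl i.castSucc, [], {(i, b)}, Sum.inl i.succ⟩
  | Sum.inr (Sum.inl (m, j)) =>
      ⟨Sum.inr m.castSucc, [⟨((φ m j).1, !(φ m j).2), Cmp.ge, 1⟩], ∅, Sum.inr m.succ⟩
  | Sum.inr (Sum.inr true) =>
      ⟨Sum.inl (Fin.last k), [], ∅, Sum.inr 0⟩
  | Sum.inr (Sum.inr false) =>
      ⟨Sum.inr (Fin.last n), [], ∅, Sum.inl 0⟩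

/-- The automaton `A^Z_φ` (guards `cl(¬ℓ) ≥ 1` on the clause transitions). -/
def AZfor (k n : ℕ) (φ : Fin n → Fin 3 → Lit k) : TA (CNFState k n) (Lit k) :=
  ⟨Sum.inl 0, Set.range (azTrans k n φ), Set.finite_range _⟩


namespace FMcore

/-- A difference constraint `φ u - φ w < c` (strict) or `≤ c`. -/
structure DC (V : Type) where
  u : V
  w : V
  s : Bool
  c : ℤ

/-- bound satisfaction -/
def bsat : Bool → ℝ → ℝ → Prop
  | true, d, c => d < c
  | false, d, c => d ≤ c

lemma bsat_le {s : Bool} {d c : ℝ} (h : bsat s d c) : d ≤ c := by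
  cases s
  · exact h
  · exact le_of_lt h

lemma bsat_mono {s : Bool} {d d' c : ℝ} (h : d' ≤ d) (hb : bsat s d c) : bsat s d' c := by
  cases s <;> simp only [bsat] at * <;> linarith

lemma bsat_add {s t : Bool} {d e c f : ℝ} (h1 : bsat s d c) (h2 : bsat t e f) :
    bsat (s || t) (d + e) (c + f) := by
  cases s <;> cases t <;> simp only [bsat, Bool.or_self, Bool.or_true, Bool.true_or,
    Bool.false_or, Bool.or_false] at * <;> linarith

def DC.sat {V : Type} (φ : V → ℝ) (d : DC V) : Prop := bsat d.s (φ d.u - φ d.w) d.c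

def LSat {V : Type} (φ : V → ℝ) (L : List (DC V)) : Prop := ∀ d ∈ L, d.sat φ

/-- satisfaction of a lower bound `(a, strict)` : `a < r` or `a ≤ r`. -/
def lowsat (r : ℝ) : ℝ × Bool → Prop
  | (a, true) => a < r
  | (a, false) => a ≤ r

def upsat (r : ℝ) : ℝ × Bool → Prop
  | (a, true) => r < a
  | (a, false) => r ≤ a

/-- combine two lower bounds: keep the stronger -/
noncomputable def max2 (p q : ℝ × Bool) : ℝ × Bool :=
  if p.1 < q.1 then q else if q.1 < p.1 then p else (p.1, p.2 || q.2)

noncomputable def combL : List (ℝ × Bool) → Option (ℝ × Bool)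
  | [] => none
  | p :: t => some ((combL t).elim p (max2 p))

noncomputable def min2 (p q : ℝ × Bool) : ℝ × Bool :=
  if p.1 < q.1 then p else if q.1 < p.1 then q else (p.1, p.2 || q.2)

noncomputable def combU : List (ℝ × Bool) → Option (ℝ × Bool)
  | [] => none
  | p :: t => some ((combU t).elim p (min2 p))

lemma combL_none {l : List (ℝ × Bool)} (h : combL l = none) : l = [] := by
  cases l with
  | nil => rfl
  | cons p t => simp [combL] at h

lemma combU_none {l : List (ℝ × Bool)} (h : combU l = none) : l = [] := by
  cases l with
  | nil => rfl
  | cons p t => simp [combU] at h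

lemma lowsat_max2 {r : ℝ} {p q : ℝ × Bool} :
    lowsat r (max2 p q) ↔ lowsat r p ∧ lowsat r q := by
  obtain ⟨a, s⟩ := p; obtain ⟨b, t⟩ := q
  unfold max2
  rcases lt_trichotomy a b with h1 | h1 | h1
  · simp only [h1, if_true]
    cases s <;> cases t <;> simp only [lowsat] <;>
      (constructor
       · intro h'; exact ⟨by linarith, by linarith⟩
       · intro h'; obtain ⟨hx, hy⟩ := h'; linarith)
  · subst h1
    simp only [lt_irrefl, if_false]
    cases s <;> cases t <;>
      simp only [lowsat, Bool.or_self, Bool.or_true, Bool.true_or, Bool.false_or,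
        Bool.or_false] <;>
      (constructor
       · intro h'; exact ⟨by linarith, by linarith⟩
       · intro h'; obtain ⟨hx, hy⟩ := h'; linarith)
  · have h2 : ¬ a < b := by linarith
    simp only [h2, if_false, h1, if_true]
    cases s <;> cases t <;> simp only [lowsat] <;>
      (constructor
       · intro h'; exact ⟨by linarith, by linarith⟩
       · intro h'; obtain ⟨hx, hy⟩ := h'; linarith)

lemma upsat_min2 {r : ℝ} {p q : ℝ × Bool} :
    upsat r (min2 p q) ↔ upsat r p ∧ upsat r q := by
  obtain ⟨a, s⟩ := p; obtain ⟨b, t⟩ := q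
  unfold min2
  rcases lt_trichotomy a b with h1 | h1 | h1
  · simp only [h1, if_true]
    cases s <;> cases t <;> simp only [upsat] <;>
      (constructor
       · intro h'; exact ⟨by linarith, by linarith⟩
       · intro h'; obtain ⟨hx, hy⟩ := h'; linarith)
  · subst h1
    simp only [lt_irrefl, if_false]
    cases s <;> cases t <;>
      simp only [upsat, Bool.or_self, Bool.or_true, Bool.true_or, Bool.false_or,
        Bool.or_false] <;>
      (constructor
       · intro h'; exact ⟨by linarith, by linarith⟩
       · intro h'; obtain ⟨hx, hy⟩ := h'; linarith)
  · have h2 : ¬ a < b := by linarith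
    simp only [h2, if_false, h1, if_true]
    cases s <;> cases t <;> simp only [upsat] <;>
      (constructor
       · intro h'; exact ⟨by linarith, by linarith⟩
       · intro h'; obtain ⟨hx, hy⟩ := h'; linarith)

lemma combL_sat {l : List (ℝ × Bool)} {q : ℝ × Bool} (h : combL l = some q) (r : ℝ) :
    lowsat r q ↔ ∀ p ∈ l, lowsat r p := by
  induction l generalizing q with
  | nil => simp [combL] at h
  | cons p t ih =>
    rw [combL] at h
    cases hct : combL t with
    | none =>
      have ht := combL_none hct
      rw [hct] at h
      simp only [Option.elim, Option.some.injEq] at h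
      subst h; subst ht; simp
    | some q' =>
      rw [hct] at h
      simp only [Option.elim, Option.some.injEq] at h
      subst h
      rw [lowsat_max2, ih hct]
      simp

lemma combU_sat {l : List (ℝ × Bool)} {q : ℝ × Bool} (h : combU l = some q) (r : ℝ) :
    upsat r q ↔ ∀ p ∈ l, upsat r p := by
  induction l generalizing q with
  | nil => simp [combU] at h
  | cons p t ih =>
    rw [combU] at h
    cases hct : combU t with
    | none =>
      have ht := combU_none hct
      rw [hct] at h
      simp only [Option.elim, Option.some.injEq] at h
      subst h; subst ht; simp
    | some q' =>
      rw [hct] at h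
      simp only [Option.elim, Option.some.injEq] at h
      subst h
      rw [upsat_min2, ih hct]
      simp

lemma max2_mem {p q A : ℝ × Bool} (h : max2 p q = A) :
    (∃ s, (A.1, s) = p ∨ (A.1, s) = q) ∧ (A.2 = true → (A.1, true) = p ∨ (A.1, true) = q) := by
  obtain ⟨a, s⟩ := p; obtain ⟨b, t⟩ := q
  unfold max2 at h
  rcases lt_trichotomy a b with h1 | h1 | h1
  · simp only [h1, if_true] at h
    subst h
    exact ⟨⟨t, by simp⟩, fun ht => by simp [← ht]⟩
  · subst h1
    simp only [lt_irrefl, if_false] at h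
    subst h
    refine ⟨⟨s, by simp⟩, fun hst => ?_⟩
    simp only [Bool.or_eq_true] at hst
    rcases hst with h' | h'
    · left; simp [h']
    · right; simp [h']
  · have h2 : ¬ a < b := by linarith
    simp only [h2, if_false, h1, if_true] at h
    subst h
    exact ⟨⟨s, by simp⟩, fun hs => by simp [← hs]⟩

lemma min2_mem {p q A : ℝ × Bool} (h : min2 p q = A) :
    (∃ s, (A.1, s) = p ∨ (A.1, s) = q) ∧ (A.2 = true → (A.1, true) = p ∨ (A.1, true) = q) := by
  obtain ⟨a, s⟩ := p; obtain ⟨b, t⟩ := q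
  unfold min2 at h
  rcases lt_trichotomy a b with h1 | h1 | h1
  · simp only [h1, if_true] at h
    subst h
    exact ⟨⟨s, by simp⟩, fun hs => by simp [← hs]⟩
  · subst h1
    simp only [lt_irrefl, if_false] at h
    subst h
    refine ⟨⟨s, by simp⟩, fun hst => ?_⟩
    simp only [Bool.or_eq_true] at hst
    rcases hst with h' | h'
    · left; simp [h']
    · right; simp [h']
  · have h2 : ¬ a < b := by linarith
    simp only [h2, if_false, h1, if_true] at h
    subst h
    exact ⟨⟨t, by simp⟩, fun ht => by simp [← ht]⟩

lemma combL_mem {l : List (ℝ × Bool)} {q : ℝ × Bool} (h : combL l = some q) :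
    (∃ s, (q.1, s) ∈ l) ∧ (q.2 = true → (q.1, true) ∈ l) := by
  induction l generalizing q with
  | nil => simp [combL] at h
  | cons p t ih =>
    rw [combL] at h
    cases hct : combL t with
    | none =>
      rw [hct] at h
      simp only [Option.elim, Option.some.injEq] at h
      subst h
      exact ⟨⟨p.2, by simp⟩, fun hq => by simp [← hq]⟩
    | some q' =>
      rw [hct] at h
      simp only [Option.elim, Option.some.injEq] at h
      obtain ⟨h1, h2⟩ := max2_mem h
      obtain ⟨h1', h2'⟩ := ih hct
      constructor
      · obtain ⟨s, hs⟩ := h1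
        rcases hs with hs | hs
        · exact ⟨s, by rw [hs]; exact List.mem_cons_self⟩
        · obtain ⟨s', hs'⟩ := h1'
          have hq1 : q.1 = q'.1 := by rw [← hs]
          exact ⟨s', by rw [hq1]; exact List.mem_cons_of_mem _ hs'⟩
      · intro hq
        rcases h2 hq with hs | hs
        · rw [hs]; exact List.mem_cons_self
        · have hq1 : q.1 = q'.1 := by rw [← hs]
          have hq2' : q'.2 = true := by rw [← hs]
          rw [hq1]
          exact List.mem_cons_of_mem _ (h2' hq2')

lemma combU_mem {l : List (ℝ × Bool)} {q : ℝ × Bool} (h : combU l = some q) :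
    (∃ s, (q.1, s) ∈ l) ∧ (q.2 = true → (q.1, true) ∈ l) := by
  induction l generalizing q with
  | nil => simp [combU] at h
  | cons p t ih =>
    rw [combU] at h
    cases hct : combU t with
    | none =>
      rw [hct] at h
      simp only [Option.elim, Option.some.injEq] at h
      subst h
      exact ⟨⟨p.2, by simp⟩, fun hq => by simp [← hq]⟩
    | some q' =>
      rw [hct] at h
      simp only [Option.elim, Option.some.injEq] at h
      obtain ⟨h1, h2⟩ := min2_mem h
      obtain ⟨h1', h2'⟩ := ih hct
      constructor
      · obtain ⟨s, hs⟩ := h1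
        rcases hs with hs | hs
        · exact ⟨s, by rw [hs]; exact List.mem_cons_self⟩
        · obtain ⟨s', hs'⟩ := h1'
          have hq1 : q.1 = q'.1 := by rw [← hs]
          exact ⟨s', by rw [hq1]; exact List.mem_cons_of_mem _ hs'⟩
      · intro hq
        rcases h2 hq with hs | hs
        · rw [hs]; exact List.mem_cons_self
        · have hq1 : q.1 = q'.1 := by rw [← hs]
          have hq2' : q'.2 = true := by rw [← hs]
          rw [hq1]
          exact List.mem_cons_of_mem _ (h2' hq2')

/-- Existence of a point between compatible finite families of lower/upper bounds. -/
lemma interval_lemma (lows ups : List (ℝ × Bool))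
    (h : ∀ p ∈ lows, ∀ q ∈ ups, bsat (p.2 || q.2) (p.1 - q.1) 0) :
    ∃ r : ℝ, (∀ p ∈ lows, lowsat r p) ∧ (∀ q ∈ ups, upsat r q) := by
  cases hl : combL lows with
  | none =>
    have := combL_none hl; subst this
    cases hu : combU ups with
    | none =>
      have := combU_none hu; subst this
      exact ⟨0, by simp, by simp⟩
    | some q =>
      refine ⟨q.1 - 1, by simp, ?_⟩
      rw [← combU_sat hu]
      obtain ⟨b, t⟩ := q
      cases t <;> simp only [upsat] <;> linarith
  | some p =>
    cases hu : combU ups with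
    | none =>
      have := combU_none hu; subst this
      refine ⟨p.1 + 1, ?_, by simp⟩
      rw [← combL_sat hl]
      obtain ⟨a, s⟩ := p
      cases s <;> simp only [lowsat] <;> linarith
    | some q =>
      obtain ⟨⟨sp, hsp⟩, hpt⟩ := combL_mem hl
      obtain ⟨⟨sq, hsq⟩, hqt⟩ := combU_mem hu
      have hle : p.1 ≤ q.1 := by
        have := h _ hsp _ hsq
        exact by linarith [bsat_le this]
      have hstrict : p.2 = true ∨ q.2 = true → p.1 < q.1 := by
        intro hor
        rcases hor with h2 | h2
        · have := h _ (hpt h2) _ hsq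
          simp only [Bool.true_or] at this
          have : p.1 - q.1 < 0 := this
          linarith
        · have := h _ hsp _ (hqt h2)
          simp only [Bool.or_true] at this
          have : p.1 - q.1 < 0 := this
          linarith
      by_cases hpq : p.1 < q.1
      · refine ⟨(p.1 + q.1) / 2, ?_, ?_⟩
        · rw [← combL_sat hl]
          obtain ⟨a, s⟩ := p
          simp only at hpq hle
          cases s <;> simp only [lowsat] <;> [linarith; linarith]
        · rw [← combU_sat hu]
          obtain ⟨b, t⟩ := q
          cases t <;> simp only [upsat] <;> [linarith; linarith]
      · have heq : p.1 = q.1 := le_antisymm hle (not_lt.1 hpq)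
        have hp2 : p.2 = false := by
          cases h2 : p.2
          · rfl
          · exact absurd (hstrict (Or.inl h2)) hpq
        have hq2 : q.2 = false := by
          cases h2 : q.2
          · rfl
          · exact absurd (hstrict (Or.inr h2)) hpq
        refine ⟨p.1, ?_, ?_⟩
        · rw [← combL_sat hl]
          obtain ⟨a, s⟩ := p
          simp only at hp2; subst hp2
          simp only [lowsat]; exact le_refl _
        · rw [← combU_sat hu]
          obtain ⟨b, t⟩ := q
          simp only at hq2 heq; subst hq2
          simp only [upsat]; exact le_of_eq heq

end FMcore

namespace FMcore2
open FMcore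

variable {V : Type} [DecidableEq V]

lemma bsat_shift {s : Bool} {d c : ℝ} : bsat s d c ↔ bsat s (d - c) 0 := by
  cases s <;> simp only [bsat] <;> constructor <;> intro <;> linarith

/-- Fourier–Motzkin elimination of the variable `z`. -/
noncomputable def elim (z : V) (L : List (DC V)) : List (DC V) :=
  L.filter (fun d => decide ((d.u ≠ z ∧ d.w ≠ z) ∨ (d.u = z ∧ d.w = z)))
  ++ (L.filter (fun d => decide (d.w = z ∧ d.u ≠ z))).flatMap
       (fun d => (L.filter (fun e => decide (e.u = z ∧ e.w ≠ z))).map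
         (fun e => ⟨d.u, e.w, d.s || e.s, d.c + e.c⟩))

theorem elim_sat (z : V) (L : List (DC V)) (φ : V → ℝ) :
    LSat φ (elim z L) ↔ ∃ r : ℝ, LSat (Function.update φ z r) L := by
  classical
  constructor
  · intro h
    -- build bound lists
    set lowsL := (L.filter (fun d => decide (d.w = z ∧ d.u ≠ z))) with hlowsL
    set upsL := (L.filter (fun e => decide (e.u = z ∧ e.w ≠ z))) with hupsL
    set lows := lowsL.map (fun d => (φ d.u - d.c, d.s)) with hlows
    set ups := upsL.map (fun e => (φ e.w + e.c, e.s)) with hups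
    have hgap : ∀ p ∈ lows, ∀ q ∈ ups, bsat (p.2 || q.2) (p.1 - q.1) 0 := by
      intro p hp q hq
      rw [hlows] at hp
      rw [hups] at hq
      obtain ⟨d, hd, hdp⟩ := List.mem_map.1 hp
      obtain ⟨e, he, heq⟩ := List.mem_map.1 hq
      have hmem : (⟨d.u, e.w, d.s || e.s, d.c + e.c⟩ : DC V) ∈ elim z L := by
        unfold elim
        refine List.mem_append.2 (Or.inr ?_)
        refine List.mem_flatMap.2 ⟨d, hd, ?_⟩
        exact List.mem_map.2 ⟨e, he, rfl⟩
      have := h _ hmem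
      unfold DC.sat at this
      simp only at this
      rw [← hdp, ← heq]
      simp only
      have hc : (φ d.u - d.c) - (φ e.w + e.c) = (φ d.u - φ e.w) - (d.c + e.c) := by
        push_cast; ring
      rw [hc]
      rw [Int.cast_add] at this
      exact bsat_shift.1 this
    obtain ⟨r, hrl, hru⟩ := interval_lemma lows ups hgap
    refine ⟨r, ?_⟩
    intro d hd
    unfold DC.sat
    by_cases hu : d.u = z <;> by_cases hw : d.w = z
    · -- self-loop
      have hmem : d ∈ elim z L := by
        unfold elim
        refine List.mem_append.2 (Or.inl ?_)
        refine List.mem_filter.2 ⟨hd, by simp [hu, hw]⟩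
      have := h _ hmem
      unfold DC.sat at this
      rw [hu, hw] at this ⊢
      simpa using this
    · -- upper bound on z
      have hdu : d ∈ upsL := by
        rw [hupsL]; exact List.mem_filter.2 ⟨hd, by simp [hu, hw]⟩
      have hq : (φ d.w + d.c, d.s) ∈ ups := by
        rw [hups]; exact List.mem_map.2 ⟨d, hdu, rfl⟩
      have := hru _ hq
      rw [hu, Function.update_self, Function.update_of_ne hw]
      cases hs : d.s <;> rw [hs] at this <;> simp only [upsat] at this <;>
        simp only [bsat] <;> linarith
    · -- lower bound on z
      have hdl : d ∈ lowsL := by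
        rw [hlowsL]; exact List.mem_filter.2 ⟨hd, by simp [hu, hw]⟩
      have hp : (φ d.u - d.c, d.s) ∈ lows := by
        rw [hlows]; exact List.mem_map.2 ⟨d, hdl, rfl⟩
      have := hrl _ hp
      rw [hw, Function.update_self, Function.update_of_ne hu]
      cases hs : d.s <;> rw [hs] at this <;> simp only [lowsat] at this <;>
        simp only [bsat] <;> linarith
    · have hmem : d ∈ elim z L := by
        unfold elim
        refine List.mem_append.2 (Or.inl ?_)
        refine List.mem_filter.2 ⟨hd, by simp [hu, hw]⟩
      have := h _ hmem
      unfold DC.sat at this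
      rwa [Function.update_of_ne hu, Function.update_of_ne hw]
  · rintro ⟨r, hr⟩
    intro d hd
    unfold elim at hd
    rcases List.mem_append.1 hd with hd1 | hd2
    · obtain ⟨hdL, hcond⟩ := List.mem_filter.1 hd1
      have := hr _ hdL
      unfold DC.sat at this ⊢
      simp only [decide_eq_true_eq] at hcond
      rcases hcond with ⟨hu, hw⟩ | ⟨hu, hw⟩
      · rwa [Function.update_of_ne hu, Function.update_of_ne hw] at this
      · rw [hu, hw] at this ⊢
        simpa using this
    · obtain ⟨d', hd', hmem⟩ := List.mem_flatMap.1 hd2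
      obtain ⟨e', he', heq⟩ := List.mem_map.1 hmem
      obtain ⟨hd'L, hcond1⟩ := List.mem_filter.1 hd'
      obtain ⟨he'L, hcond2⟩ := List.mem_filter.1 he'
      simp only [decide_eq_true_eq] at hcond1 hcond2
      have h1 := hr _ hd'L
      have h2 := hr _ he'L
      unfold DC.sat at h1 h2 ⊢
      rw [hcond1.1, Function.update_self, Function.update_of_ne hcond1.2] at h1
      rw [hcond2.1, Function.update_self, Function.update_of_ne hcond2.2] at h2
      subst heq
      simp only
      have := bsat_add h1 h2
      have heq2 : (φ d'.u - r) + (r - φ e'.w) = φ d'.u - φ e'.w := by ring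
      rw [heq2] at this
      rw [show ((↑(d'.c + e'.c) : ℝ)) = (d'.c : ℝ) + (e'.c : ℝ) by push_cast; ring]
      exact this

/-- Iterated elimination. -/
noncomputable def elimL : List V → List (DC V) → List (DC V)
  | [], L => L
  | z :: zs, L => elimL zs (elim z L)

theorem elimL_sat (zs : List V) (L : List (DC V)) (φ : V → ℝ) :
    LSat φ (elimL zs L) ↔ ∃ ψ : V → ℝ, (∀ v, v ∉ zs → ψ v = φ v) ∧ LSat ψ L := by
  classical
  induction zs generalizing L φ with
  | nil =>
    constructor
    · intro h; exact ⟨φ, fun _ _ => rfl, h⟩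
    · rintro ⟨ψ, hag, h⟩
      have : ψ = φ := funext fun v => hag v (by simp)
      rwa [← this]
  | cons z zs ih =>
    constructor
    · intro h
      obtain ⟨ψ, hag, hs⟩ := (ih (elim z L) φ).1 h
      obtain ⟨r, hr⟩ := (elim_sat z L ψ).1 hs
      refine ⟨Function.update ψ z r, fun v hv => ?_, hr⟩
      simp only [List.mem_cons, not_or] at hv
      rw [Function.update_of_ne hv.1]
      exact hag v hv.2
    · rintro ⟨ψ', hag, hs⟩
      apply (ih (elim z L) φ).2
      refine ⟨Function.update ψ' z (φ z), fun v hv => ?_, ?_⟩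
      · by_cases hvz : v = z
        · subst hvz; rw [Function.update_self]
        · rw [Function.update_of_ne hvz]
          exact hag v (by simp [hvz, hv])
      · apply (elim_sat z L _).2
        refine ⟨ψ' z, ?_⟩
        have : Function.update (Function.update ψ' z (φ z)) z (ψ' z) = ψ' := by
          rw [Function.update_idem]
          exact Function.update_eq_self z ψ'
        rwa [this]

end FMcore2

section ZoneClosure
open FMcore FMcore2

variable {C : Type} [Fintype C]

/-- translate a comparison into difference constraints -/
def cmpDC (u w : Option C) : Cmp → ℤ → List (DC (Option C))
  | .lt, c => [⟨u, w, true, c⟩]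
  | .le, c => [⟨u, w, false, c⟩]
  | .eq, c => [⟨u, w, false, c⟩, ⟨w, u, false, -c⟩]
  | .ge, c => [⟨w, u, false, -c⟩]
  | .gt, c => [⟨w, u, true, -c⟩]

lemma cmpDC_sat (φ : Option C → ℝ) (u w : Option C) (cmp : Cmp) (c : ℤ) :
    (∀ d ∈ cmpDC u w cmp c, d.sat φ) ↔ cmp.holds (φ u - φ w) c := by
  cases cmp <;>
    simp only [cmpDC, List.mem_singleton, List.mem_cons, List.not_mem_nil, or_false,
      forall_eq, forall_eq_or_imp, DC.sat, bsat, Cmp.holds, Int.cast_neg] <;>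
    constructor <;> intro h <;>
    first
      | linarith
      | (exact ⟨by linarith [h], by linarith [h]⟩)
      | (obtain ⟨h1, h2⟩ := h; linarith)

def zcDC : ZoneConstraint C → List (DC (Option C))
  | .single x cmp c => cmpDC (some x) none cmp c
  | .diff x y cmp c => cmpDC (some x) (some y) cmp c

lemma zcDC_sat (v : Val C) (cc : ZoneConstraint C) :
    (∀ d ∈ zcDC cc, d.sat (ext0 v)) ↔ cc.sat v := by
  cases cc with
  | single x cmp c =>
    rw [show zcDC (.single x cmp c) = cmpDC (some x) none cmp c from rfl, cmpDC_sat]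
    unfold ZoneConstraint.sat ext0
    simp
  | diff x y cmp c =>
    rw [show zcDC (.diff x y cmp c) = cmpDC (some x) (some y) cmp c from rfl, cmpDC_sat]
    unfold ZoneConstraint.sat ext0
    simp

def gcDC (cc : ClockConstraint C) : List (DC (Option C)) :=
  cmpDC (some cc.clock) none cc.cmp (cc.bound : ℤ)

lemma gcDC_sat (v : Val C) (g : Guard C) :
    (∀ d ∈ g.flatMap gcDC, d.sat (ext0 v)) ↔ GSat v g := by
  unfold GSat
  constructor
  · intro h cc hcc
    have := (cmpDC_sat (ext0 v) (some cc.clock) none cc.cmp (cc.bound : ℤ)).1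
      (fun d hd => h d (List.mem_flatMap.2 ⟨cc, hcc, hd⟩))
    unfold ext0 at this
    simpa using this
  · intro h d hd
    obtain ⟨cc, hcc, hdcc⟩ := List.mem_flatMap.1 hd
    have := h cc hcc
    refine (cmpDC_sat (ext0 v) (some cc.clock) none cc.cmp (cc.bound : ℤ)).2 ?_ d hdcc
    unfold ext0
    simpa using this

/-- back-translation of a difference constraint into zone constraints -/
def dcZC : DC (Option C) → List (ZoneConstraint C)
  | ⟨some x, some y, s, c⟩ => [.diff x y (if s then .lt else .le) c]
  | ⟨some x, none, s, c⟩ => [.single x (if s then .lt else .le) c]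
  | ⟨none, some y, s, c⟩ => [.single y (if s then .gt else .ge) (-c)]
  | ⟨none, none, _, _⟩ => []

lemma dcZC_sat (v : Val C) (d : DC (Option C))
    (hnn : d.u = none → d.w = none → bsat d.s 0 (d.c : ℝ)) :
    (∀ cc ∈ dcZC d, cc.sat v) ↔ d.sat (ext0 v) := by
  obtain ⟨u, w, s, c⟩ := d
  match u, w with
  | some x, some y =>
    simp only [dcZC, List.mem_singleton, forall_eq]
    unfold ZoneConstraint.sat DC.sat ext0
    cases s <;> simp [bsat, Cmp.holds]
  | some x, none =>
    simp only [dcZC, List.mem_singleton, forall_eq]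
    unfold ZoneConstraint.sat DC.sat ext0
    cases s <;> simp [bsat, Cmp.holds]
  | none, some y =>
    simp only [dcZC, List.mem_singleton, forall_eq]
    unfold ZoneConstraint.sat DC.sat ext0
    cases s <;> simp only [bsat, Cmp.holds, Int.cast_neg] <;>
      constructor <;> intro h <;> simp at h ⊢ <;> linarith
  | none, none =>
    simp only [dcZC, List.not_mem_nil, false_implies, implies_true, true_iff]
    have := hnn rfl rfl
    unfold DC.sat ext0
    simpa using this

lemma isZone_of_LSat (L : List (DC (Option C))) (v₀ : Val C) (h₀ : LSat (ext0 v₀) L) :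
    IsZone {v : Val C | LSat (ext0 v) L} := by
  refine ⟨L.flatMap dcZC, ?_⟩
  ext v
  simp only [Set.mem_setOf_eq]
  constructor
  · intro h cc hcc
    obtain ⟨d, hd, hccd⟩ := List.mem_flatMap.1 hcc
    have hnn : d.u = none → d.w = none → bsat d.s 0 (d.c : ℝ) := by
      intro hu hw
      have := h₀ d hd
      unfold DC.sat at this
      rw [hu, hw] at this
      simpa using this
    exact (dcZC_sat v d hnn).2 (h d hd) cc hccd
  · intro h d hd
    have hnn : d.u = none → d.w = none → bsat d.s 0 (d.c : ℝ) := by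
      intro hu hw
      have := h₀ d hd
      unfold DC.sat at this
      rw [hu, hw] at this
      simpa using this
    exact (dcZC_sat v d hnn).1 (fun cc hcc => h cc (List.mem_flatMap.2 ⟨d, hd, hcc⟩)) 

/-- nonnegativity constraints for all clocks -/
noncomputable def nnL : List (DC (Option C)) :=
  (Finset.univ : Finset C).toList.map (fun x => ⟨none, some x, false, 0⟩)

lemma nnL_sat (v : Val C) : LSat (ext0 v) (nnL (C := C)) := by
  intro d hd
  obtain ⟨x, _, hx⟩ := List.mem_map.1 hd
  subst hx
  unfold DC.sat ext0
  simp [bsat]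

noncomputable def zoneL (l : List (ZoneConstraint C)) : List (DC (Option C)) :=
  l.flatMap zcDC ++ nnL

lemma zoneL_sat (v : Val C) (l : List (ZoneConstraint C)) :
    LSat (ext0 v) (zoneL l) ↔ ∀ cc ∈ l, cc.sat v := by
  constructor
  · intro h cc hcc
    refine (zcDC_sat v cc).1 (fun d hd => ?_)
    exact h d (List.mem_append.2 (Or.inl (List.mem_flatMap.2 ⟨cc, hcc, hd⟩)))
  · intro h d hd
    rcases List.mem_append.1 hd with hd1 | hd2
    · obtain ⟨cc, hcc, hdcc⟩ := List.mem_flatMap.1 hd1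
      exact (zcDC_sat v cc).2 (h cc hcc) d hdcc
    · exact nnL_sat v d hd2

/-- reset-projection set -/
def rSet (R : Set C) (W : Set (Val C)) : Set (Val C) :=
  {u | (∀ x ∈ R, u x = 0) ∧ ∃ v ∈ W, ∀ x ∉ R, v x = u x}

/-- time-elapse set -/
def eSet (W : Set (Val C)) : Set (Val C) :=
  {u | ∃ v ∈ W, ∃ δ : NNReal, ∀ x, u x = v x + δ}

lemma isZone_rSet (R : Set C) (W : Set (Val C)) (hW : IsZone W)
    (hne : (rSet R W).Nonempty) : IsZone (rSet R W) := by
  classical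
  obtain ⟨l, hl⟩ := hW
  set zs : List (Option C) :=
    ((Finset.univ : Finset C).toList.filter (fun x => decide (x ∈ R))).map some with hzs
  have hmem_zs : ∀ x : C, some x ∈ zs ↔ x ∈ R := by
    intro x
    rw [hzs]
    simp [List.mem_filter]
  have hnone_zs : (none : Option C) ∉ zs := by
    rw [hzs]; simp
  set E := elimL zs (zoneL l) with hE
  have claim : ∀ u : Val C, LSat (ext0 u) E ↔ (∃ v ∈ W, ∀ x ∉ R, v x = u x) := by
    intro u
    rw [hE, elimL_sat]
    constructor
    · rintro ⟨ψ, hag, hs⟩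
      have hψnone : ψ none = 0 := hag none hnone_zs
      have hψnn : ∀ x : C, 0 ≤ ψ (some x) := by
        intro x
        have hd : (⟨none, some x, false, 0⟩ : DC (Option C)) ∈ zoneL l :=
          List.mem_append.2 (Or.inr (List.mem_map.2 ⟨x, by simp, rfl⟩))
        have := hs _ hd
        unfold DC.sat at this
        simp only [bsat] at this
        rw [hψnone] at this
        push_cast at this
        linarith
      set v : Val C := fun x => Real.toNNReal (ψ (some x)) with hv
      have hext : ext0 v = ψ := by
        funext o
        cases o with
        | none => simp [ext0, hψnone]
        | some x => simp [ext0, hv, Real.coe_toNNReal _ (hψnn x)]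
      refine ⟨v, ?_, ?_⟩
      · rw [hl]
        exact (zoneL_sat v l).1 (by rwa [hext])
      · intro x hx
        have : some x ∉ zs := fun hmem => hx ((hmem_zs x).1 hmem)
        have := hag (some x) this
        rw [← hext] at this
        unfold ext0 at this
        have : (v x : ℝ) = (u x : ℝ) := this
        exact_mod_cast this
    · rintro ⟨v, hvW, hags⟩
      refine ⟨ext0 v, ?_, ?_⟩
      · intro o ho
        cases o with
        | none => rfl
        | some x =>
          have hx : x ∉ R := fun hxR => ho ((hmem_zs x).2 hxR)
          have hxe := hags x hx
          simp [ext0, hxe]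
      · rw [hl] at hvW
        exact (zoneL_sat v l).2 hvW
  obtain ⟨u₀, hu₀⟩ := hne
  have hu₀E : LSat (ext0 u₀) E := (claim u₀).2 hu₀.2
  have hzoneE := isZone_of_LSat E u₀ hu₀E
  obtain ⟨lE, hlE⟩ := hzoneE
  refine ⟨lE ++ ((Finset.univ : Finset C).toList.filter (fun x => decide (x ∈ R))).map
    (fun x => .single x .eq 0), ?_⟩
  ext u
  constructor
  · intro hu
    intro cc hcc
    rcases List.mem_append.1 hcc with h1 | h2
    · have : u ∈ {v : Val C | LSat (ext0 v) E} := (claim u).2 hu.2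
      rw [hlE] at this
      exact this cc h1
    · obtain ⟨x, hx, hxcc⟩ := List.mem_map.1 h2
      subst hxcc
      have hxR : x ∈ R := by
        simp only [List.mem_filter, decide_eq_true_eq] at hx
        exact hx.2
      unfold ZoneConstraint.sat
      simp only [Cmp.holds]
      rw [hu.1 x hxR]
      simp
  · intro hu
    have h1 : u ∈ {v : Val C | LSat (ext0 v) E} := by
      rw [hlE]
      intro cc hcc
      exact hu cc (List.mem_append.2 (Or.inl hcc))
    have h2 : ∀ x ∈ R, u x = 0 := by
      intro x hxR
      have hmem : (ZoneConstraint.single x .eq 0) ∈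
          ((Finset.univ : Finset C).toList.filter (fun x => decide (x ∈ R))).map
            (fun x => ZoneConstraint.single x Cmp.eq 0) :=
        List.mem_map.2 ⟨x, by simp [List.mem_filter, hxR], rfl⟩
      have := hu _ (List.mem_append.2 (Or.inr hmem))
      unfold ZoneConstraint.sat at this
      simp only [Cmp.holds] at this
      exact_mod_cast by simpa using this
    exact ⟨h2, (claim u).1 h1⟩

def dmap {α β : Type} (f : α → β) (d : DC α) : DC β := ⟨f d.u, f d.w, d.s, d.c⟩

lemma dmap_sat {α β : Type} (f : α → β) (d : DC α) (φ : β → ℝ) :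
    (dmap f d).sat φ ↔ d.sat (φ ∘ f) := Iff.rfl

lemma dsat_shift {α : Type} (d : DC α) (φ ψ : α → ℝ) (r : ℝ)
    (h : ∀ o, φ o = ψ o + r) : d.sat ψ → d.sat φ := by
  intro hs
  unfold DC.sat at hs ⊢
  have : φ d.u - φ d.w = ψ d.u - ψ d.w := by rw [h, h]; ring
  rwa [this]

lemma isZone_eSet (W : Set (Val C)) (hW : IsZone W)
    (hne : (eSet W).Nonempty) : IsZone (eSet W) := by
  classical
  obtain ⟨l, hl⟩ := hW
  -- variable type with an extra δ variable
  let rl : Option C → Option C ⊕ Unit := fun o => o.elim (Sum.inr ()) (fun x => Sum.inl (some x))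
  let pb : Option C ⊕ Unit → Option C := fun w => w.elim id (fun _ => none)
  set Sys : List (DC (Option C ⊕ Unit)) :=
    (l.flatMap zcDC).map (dmap rl)
      ++ [⟨Sum.inl none, Sum.inr (), false, 0⟩]
      ++ (Finset.univ : Finset C).toList.map
           (fun x => ⟨Sum.inr (), Sum.inl (some x), false, 0⟩) with hSys
  set E : List (DC (Option C)) := (elim (Sum.inr ()) Sys).map (dmap pb) with hE
  have claim : ∀ u : Val C, LSat (ext0 u) E ↔ u ∈ eSet W := by
    intro u
    have step1 : LSat (ext0 u) E ↔ LSat (ext0 u ∘ pb) (elim (Sum.inr ()) Sys) := by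
      rw [hE]
      constructor
      · intro h d hd
        exact (dmap_sat pb d (ext0 u)).1 (h _ (List.mem_map.2 ⟨d, hd, rfl⟩))
      · intro h d hd
        obtain ⟨d', hd', hdd⟩ := List.mem_map.1 hd
        subst hdd
        exact (dmap_sat pb d' (ext0 u)).2 (h _ hd')
    rw [step1, elim_sat]
    constructor
    · rintro ⟨r, hs⟩
      set φ' := Function.update (ext0 u ∘ pb) (Sum.inr ()) r with hφ'
      have hinl : ∀ o : Option C, φ' (Sum.inl o) = ext0 u o := by
        intro o
        rw [hφ', Function.update_of_ne (by simp)]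
        rfl
      have hinr : φ' (Sum.inr ()) = r := by rw [hφ', Function.update_self]
      have hr0 : 0 ≤ r := by
        have hd : (⟨Sum.inl none, Sum.inr (), false, 0⟩ : DC (Option C ⊕ Unit)) ∈ Sys := by
          rw [hSys]
          refine List.mem_append.2 (Or.inl (List.mem_append.2 (Or.inr ?_)))
          simp
        have := hs _ hd
        unfold DC.sat at this
        simp only [bsat] at this
        rw [hinr] at this
        have h0 : φ' (Sum.inl none) = 0 := by rw [hinl]; rfl
        rw [h0] at this
        push_cast at this
        linarith
      have hrx : ∀ x : C, r ≤ (u x : ℝ) := by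
        intro x
        have hd : (⟨Sum.inr (), Sum.inl (some x), false, 0⟩ : DC (Option C ⊕ Unit)) ∈ Sys := by
          rw [hSys]
          refine List.mem_append.2 (Or.inr ?_)
          exact List.mem_map.2 ⟨x, by simp, rfl⟩
        have := hs _ hd
        unfold DC.sat at this
        simp only [bsat] at this
        rw [hinr, hinl] at this
        have : r - (u x : ℝ) ≤ 0 := by
          simpa [ext0] using this
        linarith
      set v : Val C := fun x => Real.toNNReal ((u x : ℝ) - r) with hv
      have hvcoe : ∀ x, (v x : ℝ) = (u x : ℝ) - r := by
        intro x
        rw [hv]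
        exact Real.coe_toNNReal _ (by linarith [hrx x])
      refine ⟨v, ?_, Real.toNNReal r, ?_⟩
      · rw [hl]
        refine fun cc hcc => (zcDC_sat v cc).1 (fun d hd => ?_)
        have hdSys : dmap rl d ∈ Sys := by
          rw [hSys]
          refine List.mem_append.2 (Or.inl (List.mem_append.2 (Or.inl ?_)))
          exact List.mem_map.2 ⟨d, List.mem_flatMap.2 ⟨cc, hcc, hd⟩, rfl⟩
        have hsat := (dmap_sat rl d φ').1 (hs _ hdSys)
        refine dsat_shift d (ext0 v) ((fun o => φ' (rl o) - r)) 0 ?_ ?_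
        · intro o
          cases o with
          | none =>
            show (0 : ℝ) = φ' (rl none) - r + 0
            show (0 : ℝ) = φ' (Sum.inr ()) - r + 0
            rw [hinr]; ring
          | some x =>
            show (v x : ℝ) = φ' (rl (some x)) - r + 0
            show (v x : ℝ) = φ' (Sum.inl (some x)) - r + 0
            rw [hinl, hvcoe]
            show (u x : ℝ) - r = (u x : ℝ) - r + 0
            ring
        · refine dsat_shift d _ (φ' ∘ rl) (-r) ?_ hsat
          intro o
          show φ' (rl o) - r = φ' (rl o) + (-r)
          ring
      · intro x
        have : (u x : ℝ) = (v x : ℝ) + r := by rw [hvcoe]; ring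
        have hrr : (Real.toNNReal r : ℝ) = r := Real.coe_toNNReal _ hr0
        apply NNReal.coe_injective
        rw [NNReal.coe_add, hrr, this]
    · rintro ⟨v, hvW, δ, hδ⟩
      refine ⟨(δ : ℝ), ?_⟩
      set φ' := Function.update (ext0 u ∘ pb) (Sum.inr ()) (δ : ℝ) with hφ'
      have hinl : ∀ o : Option C, φ' (Sum.inl o) = ext0 u o := by
        intro o
        rw [hφ', Function.update_of_ne (by simp)]
        rfl
      have hinr : φ' (Sum.inr ()) = (δ : ℝ) := by rw [hφ', Function.update_self]
      intro d hd
      rw [hSys] at hd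
      rcases List.mem_append.1 hd with hd1 | hd3
      · rcases List.mem_append.1 hd1 with hd1 | hd2
        · obtain ⟨d', hd', hdd⟩ := List.mem_map.1 hd1
          subst hdd
          obtain ⟨cc, hcc, hd'cc⟩ := List.mem_flatMap.1 hd'
          have hvcc : d'.sat (ext0 v) := by
            have : cc.sat v := by rw [hl] at hvW; exact hvW cc hcc
            exact (zcDC_sat v cc).2 this d' hd'cc
          rw [dmap_sat]
          refine dsat_shift d' (φ' ∘ rl) (ext0 v) (δ : ℝ) ?_ hvcc
          intro o
          cases o with
          | none =>
            show φ' (Sum.inr ()) = ext0 v none + (δ : ℝ)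
            rw [hinr]
            show (δ : ℝ) = 0 + (δ : ℝ)
            ring
          | some x =>
            show φ' (Sum.inl (some x)) = ext0 v (some x) + (δ : ℝ)
            rw [hinl]
            show (u x : ℝ) = (v x : ℝ) + (δ : ℝ)
            rw [hδ x]
            push_cast
            ring
        · simp only [List.mem_singleton] at hd2
          subst hd2
          unfold DC.sat
          simp only [bsat]
          rw [hinr]
          have h0 : φ' (Sum.inl none) = 0 := by rw [hinl]; rfl
          rw [h0]
          push_cast
          have : (0 : ℝ) ≤ (δ : ℝ) := δ.coe_nonneg
          linarith
      · obtain ⟨x, _, hxd⟩ := List.mem_map.1 hd3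
        subst hxd
        unfold DC.sat
        simp only [bsat]
        rw [hinr, hinl]
        have hux : ext0 u (some x) = (u x : ℝ) := rfl
        rw [hux, hδ x]
        push_cast
        have : (0 : ℝ) ≤ (v x : ℝ) := (v x).coe_nonneg
        linarith
  obtain ⟨u₀, hu₀⟩ := hne
  have hu₀E : LSat (ext0 u₀) E := (claim u₀).2 hu₀
  obtain ⟨lE, hlE⟩ := isZone_of_LSat E u₀ hu₀E
  refine ⟨lE, ?_⟩
  ext u
  rw [show {v : Val C | ∀ cc ∈ lE, cc.sat v} = {v : Val C | LSat (ext0 v) E} from hlE.symm]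
  exact (claim u).symm

lemma isZone_inter_guard {Q : Type} (Z : Set (Val C)) (hZ : IsZone Z) (g : Guard C) :
    IsZone (Z ∩ {v | GSat v g}) := by
  obtain ⟨l, hl⟩ := hZ
  refine ⟨l ++ g.map (fun cc => .single cc.clock cc.cmp (cc.bound : ℤ)), ?_⟩
  ext v
  simp only [Set.mem_inter_iff, hl, Set.mem_setOf_eq]
  constructor
  · rintro ⟨h1, h2⟩ cc hcc
    rcases List.mem_append.1 hcc with hcc | hcc
    · exact h1 cc hcc
    · obtain ⟨c', hc', hcc'⟩ := List.mem_map.1 hcc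
      subst hcc'
      unfold ZoneConstraint.sat
      have := h2 c' hc'
      simpa using this
  · intro h
    refine ⟨fun cc hcc => h cc (List.mem_append.2 (Or.inl hcc)), fun cc hcc => ?_⟩
    have := h _ (List.mem_append.2 (Or.inr (List.mem_map.2 ⟨cc, hcc, rfl⟩)))
    unfold ZoneConstraint.sat at this
    simpa using this

lemma isZone_empty (hC : Nonempty C) : IsZone (∅ : Set (Val C)) := by
  obtain ⟨x₀⟩ := hC
  refine ⟨[.single x₀ .lt 0], ?_⟩
  ext v
  simp only [Set.mem_empty_iff_false, false_iff]
  intro h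
  have := h _ (List.mem_singleton_self _)
  unfold ZoneConstraint.sat at this
  simp only [Cmp.holds] at this
  have h0 : (0 : ℝ) ≤ (v x₀ : ℝ) := (v x₀).coe_nonneg
  push_cast at this
  linarith

lemma isZone_univ : IsZone (Set.univ : Set (Val C)) :=
  ⟨[], by ext v; simp⟩

/-- the main closure lemma: `post` preserves zones -/
lemma isZone_post {Q : Type} (t : Transition Q C) (Z : Set (Val C)) (hZ : IsZone Z) :
    IsZone (post t Z) := by
  classical
  rcases isEmpty_or_nonempty C with hC | hC
  · -- no clocks: post is either univ or ∅; and every zone is univ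
    have hZuniv : Z = Set.univ := by
      obtain ⟨l, hl⟩ := hZ
      rw [hl]
      ext v
      simp only [Set.mem_setOf_eq, Set.mem_univ, iff_true]
      intro cc _
      cases cc with
      | single x _ _ => exact (hC.false x).elim
      | diff x _ _ _ => exact (hC.false x).elim
    have : post t Z = Set.univ := by
      ext v'
      simp only [Set.mem_univ, iff_true]
      refine ⟨v', by rw [hZuniv]; trivial, 0, ?_, ?_, ?_⟩
      · intro cc _
        exact (hC.false cc.clock).elim
      · intro x _
        exact (hC.false x).elim
      · intro x _
        exact (hC.false x).elim
    rw [this]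
    exact isZone_univ
  · by_cases hg : ∃ v ∈ Z, GSat v t.guard
    · obtain ⟨v₀, hv₀, hg₀⟩ := hg
      set W1 := Z ∩ {v | GSat v t.guard} with hW1
      have hzW1 : IsZone W1 := isZone_inter_guard (Q := Q) Z hZ t.guard
      set u₀ : Val C := fun x => if x ∈ t.reset then 0 else v₀ x with hu₀
      have hu₀W2 : u₀ ∈ rSet t.reset W1 := by
        refine ⟨fun x hx => by rw [hu₀]; simp [hx], v₀, ⟨hv₀, hg₀⟩, fun x hx => ?_⟩
        rw [hu₀]; simp [hx]
      have hzW2 : IsZone (rSet t.reset W1) := isZone_rSet _ _ hzW1 ⟨u₀, hu₀W2⟩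
      have hu₀W3 : u₀ ∈ eSet (rSet t.reset W1) :=
        ⟨u₀, hu₀W2, 0, fun x => by simp⟩
      have hzW3 : IsZone (eSet (rSet t.reset W1)) := isZone_eSet _ hzW2 ⟨u₀, hu₀W3⟩
      have hpost : post t Z = eSet (rSet t.reset W1) := by
        ext v'
        constructor
        · rintro ⟨v, hvZ, δ, hG, hR, hNR⟩
          set u : Val C := fun x => if x ∈ t.reset then 0 else v x with hu
          refine ⟨u, ⟨fun x hx => by rw [hu]; simp [hx], v, ⟨hvZ, hG⟩,
            fun x hx => by rw [hu]; simp [hx]⟩, δ, ?_⟩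
          intro x
          by_cases hx : x ∈ t.reset
          · rw [hR x hx, hu]; simp [hx]
          · rw [hNR x hx, hu]; simp [hx]
        · rintro ⟨u, ⟨hz, v, ⟨hvZ, hvG⟩, hag⟩, δ, hδ⟩
          refine ⟨v, hvZ, δ, hvG, ?_, ?_⟩
          · intro x hx
            rw [hδ x, hz x hx, zero_add]
          · intro x hx
            rw [hδ x, ← hag x hx]
      rw [hpost]
      exact hzW3
    · have : post t Z = ∅ := by
        ext v'
        simp only [Set.mem_empty_iff_false, iff_false]
        rintro ⟨v, hvZ, δ, hG, _, _⟩
        exact hg ⟨v, hvZ, hG⟩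
      rw [this]
      exact isZone_empty hC

/-- the initial zone is a zone -/
lemma isZone_ZoneInit : IsZone (ZoneInit C) := by
  classical
  refine ⟨((Finset.univ : Finset C) ×ˢ (Finset.univ : Finset C)).toList.map
    (fun p => .diff p.1 p.2 .le 0), ?_⟩
  ext v
  constructor
  · rintro ⟨δ, hδ⟩ cc hcc
    obtain ⟨p, _, hp⟩ := List.mem_map.1 hcc
    subst hp
    unfold ZoneConstraint.sat
    simp only [Cmp.holds]
    rw [hδ p.1, hδ p.2]
    simp
  · intro h
    rcases isEmpty_or_nonempty C with hC | hC
    · exact ⟨0, fun x => (hC.false x).elim⟩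
    · obtain ⟨x₀⟩ := hC
      refine ⟨v x₀, fun x => ?_⟩
      have h1 := h _ (List.mem_map.2 ⟨(x, x₀), by simp, rfl⟩)
      have h2 := h _ (List.mem_map.2 ⟨(x₀, x), by simp, rfl⟩)
      unfold ZoneConstraint.sat at h1 h2
      simp only [Cmp.holds] at h1 h2
      have h1' : (v x : ℝ) ≤ (v x₀ : ℝ) := by push_cast at h1; linarith
      have h2' : (v x₀ : ℝ) ≤ (v x : ℝ) := by push_cast at h2; linarith
      have : (v x : ℝ) = (v x₀ : ℝ) := le_antisymm h1' h2'
      exact_mod_cast this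

end ZoneClosure

section MainLemmas

open FMcore FMcore2

variable {Q C : Type} [Fintype Q] [Fintype C]

/-- all zones along a path of the abstract zone graph are zones -/
lemma azg_zones (A : TA Q C) (𝔞 : Abstr C) (hfin : IsFiniteAbstraction 𝔞)
    (π : AZGPath A 𝔞) : ∀ i, IsZone (π.node i).2 := by
  intro i
  induction i with
  | zero =>
    rw [π.init_node]
    exact (hfin.1 _ isZone_ZoneInit).1
  | succ i ih =>
    obtain ⟨_, _, _, _, _, hZ'⟩ := π.step i
    rw [hZ']
    exact (hfin.1 _ (isZone_post _ _ ih)).1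

/-- time-closure invariant: along the canonical complete path, every
future-shifted valuation of the run lies in the zone -/
lemma azg_run_inv (A : TA Q C) (𝔞 : Abstr C) (hfin : IsFiniteAbstraction 𝔞)
    (π : AZGPath A 𝔞) (ρ : TARun A) (hins : Instantiates ρ π) :
    ∀ i (δ : NNReal), (fun x => ρ.val i x + δ) ∈ (π.node i).2 := by
  intro i
  induction i with
  | zero =>
    intro δ
    rw [π.init_node]
    have h1 : (fun x => ρ.val 0 x + δ) ∈ ZoneInit C :=
      ⟨δ, fun x => by show ρ.val 0 x + δ = δ; rw [ρ.init_val x, zero_add]⟩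
    exact (hfin.1 _ isZone_ZoneInit).2.1 h1
  | succ i ih =>
    intro δ
    obtain ⟨hfix, hmem, hsrc, htgt, hne, hZ'⟩ := π.step i
    have hv : (fun x => ρ.val i x + ρ.del i) ∈ (π.node i).2 := ih (ρ.del i)
    have htru : ρ.tr i = π.tr i := hins.1 i
    have hpost : (fun x => ρ.val (i + 1) x + δ) ∈ post (π.tr i) (π.node i).2 := by
      refine ⟨_, hv, δ, ?_, ?_, ?_⟩
      · rw [← htru]; exact ρ.guard_sat i
      · intro x hx
        show ρ.val (i + 1) x + δ = δ
        rw [ρ.reset_eq i x (by rwa [htru]), zero_add]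
      · intro x hx
        show ρ.val (i + 1) x + δ = _
        rw [ρ.unreset_eq i x (by rwa [htru])]
    rw [hZ']
    exact (hfin.1 _ (isZone_post _ _ (azg_zones A 𝔞 hfin π i))).2.1 hpost

/-- a Zeno run has tails of total duration `< 1` -/
lemma zeno_tail (ρdel : ℕ → NNReal) (c : ℝ)
    (hc : ∀ n : ℕ, ∑ i ∈ Finset.range n, (ρdel i : ℝ) ≤ c) :
    ∃ N0 : ℕ, ∀ m : ℕ, (∑ l ∈ Finset.Ico N0 m, (ρdel l : ℝ)) < 1 := by
  set S : ℕ → ℝ := fun n => ∑ i ∈ Finset.range n, (ρdel i : ℝ) with hS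
  have hmono : Monotone S := by
    intro a b hab
    exact Finset.sum_le_sum_of_subset_of_nonneg (Finset.range_subset_range.2 hab)
      (fun i _ _ => (ρdel i).coe_nonneg)
  have hbdd : BddAbove (Set.range S) := ⟨c, fun y ⟨n, hn⟩ => hn ▸ hc n⟩
  set T := sSup (Set.range S) with hT
  have hex : ∃ N0, T - 1 < S N0 := by
    by_contra h
    push_neg at h
    have : T - 1 ∈ upperBounds (Set.range S) := fun y ⟨n, hn⟩ => hn ▸ h n
    have := csSup_le (Set.range_nonempty S) this
    rw [← hT] at this
    linarith
  obtain ⟨N0, hN0⟩ := hex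
  refine ⟨N0, fun m => ?_⟩
  rcases le_or_gt N0 m with hm | hm
  · have : ∑ l ∈ Finset.Ico N0 m, (ρdel l : ℝ) = S m - S N0 := by
      rw [hS]
      simp only
      rw [Finset.sum_Ico_eq_sub _ hm]
    rw [this]
    have hSm : S m ≤ T := le_csSup hbdd ⟨m, rfl⟩
    linarith
  · rw [Finset.Ico_eq_empty (by omega)]
    simp

/-- Direction 1: a Zeno run yields a slow path of the slow zone graph. -/
lemma zeno_to_slow (A : TA Q C) (𝔞 : Abstr C)
    (hfin : IsFiniteAbstraction 𝔞) (hcomp : CompleteAbs A 𝔞)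
    (hz : HasZenoRun A) : ∃ π : SZGPath A 𝔞, π.Slow := by
  classical
  obtain ⟨ρ, c, hc⟩ := hz
  obtain ⟨π, hins⟩ := hcomp ρ
  have htr : ∀ i, ρ.tr i = π.tr i := hins.1
  have hinv := azg_run_inv A 𝔞 hfin π ρ hins
  obtain ⟨N0, hN0⟩ := zeno_tail ρ.del c hc
  -- choose N beyond which all resets involve small clocks
  have hgx : ∀ x : C, ∃ n : ℕ,
      ({i | x ∈ (ρ.tr i).reset}.Infinite →
        ∃ j, N0 ≤ j ∧ j < n ∧ x ∈ (ρ.tr j).reset) ∧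
      (¬ {i | x ∈ (ρ.tr i).reset}.Infinite →
        ∀ m, n ≤ m → x ∉ (ρ.tr m).reset) := by
    intro x
    by_cases hx : {i | x ∈ (ρ.tr i).reset}.Infinite
    · obtain ⟨j, hj1, hj2⟩ := hx.exists_gt N0
      exact ⟨j + 1, fun _ => ⟨j, le_of_lt hj2, Nat.lt_succ_self j, hj1⟩,
             fun h => absurd hx h⟩
    · obtain ⟨b, hb⟩ := (Set.not_infinite.mp hx).bddAbove
      refine ⟨b + 1, fun h => absurd h hx, fun _ m hm hmem => ?_⟩
      have := hb hmem
      omega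
  choose g hg1 hg2 using hgx
  set N : ℕ := (Finset.univ.sup g) ⊔ (N0 + 1) with hN
  have hNg : ∀ x : C, g x ≤ N := fun x =>
    le_trans (Finset.le_sup (Finset.mem_univ x)) le_sup_left
  have hNN0 : N0 ≤ N := le_trans (Nat.le_succ N0) le_sup_right
  -- key smallness property
  have key : ∀ i, N ≤ i → ∀ x ∈ (ρ.tr i).reset, (ρ.val i x : ℝ) + (ρ.del i : ℝ) < 1 := by
    intro i hNi x hx
    have hinf : {j | x ∈ (ρ.tr j).reset}.Infinite := by
      by_contra h
      exact hg2 x h i (le_trans (hNg x) hNi) hx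
    obtain ⟨j, hjN0, hjg, hjr⟩ := hg1 x hinf
    have hji : j < i := lt_of_lt_of_le (lt_of_lt_of_le hjg (hNg x)) hNi
    -- the last reset of x before i
    have hSne : ((Finset.Ico N0 i).filter (fun l => x ∈ (ρ.tr l).reset)).Nonempty :=
      ⟨j, Finset.mem_filter.2 ⟨Finset.mem_Ico.2 ⟨hjN0, hji⟩, hjr⟩⟩
    set jm := ((Finset.Ico N0 i).filter (fun l => x ∈ (ρ.tr l).reset)).max' hSne with hjm
    have hjmmem : jm ∈ (Finset.Ico N0 i).filter (fun l => x ∈ (ρ.tr l).reset) :=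
      Finset.max'_mem _ hSne
    obtain ⟨hjmIco, hjmr⟩ := Finset.mem_filter.1 hjmmem
    obtain ⟨hjmN0, hjmi⟩ := Finset.mem_Ico.1 hjmIco
    have hnor : ∀ l, jm < l → l < i → x ∉ (ρ.tr l).reset := by
      intro l hl1 hl2 hlr
      have hmem : l ∈ (Finset.Ico N0 i).filter (fun l => x ∈ (ρ.tr l).reset) :=
        Finset.mem_filter.2 ⟨Finset.mem_Ico.2 ⟨le_trans hjmN0 (le_of_lt hl1), hl2⟩, hlr⟩
      have hle := Finset.le_max' _ l hmem
      rw [← hjm] at hle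
      omega
    -- value of x at i
    have hval : ∀ k : ℕ, jm + 1 + k ≤ i →
        (ρ.val (jm + 1 + k) x : ℝ) = ∑ l ∈ Finset.Ico (jm + 1) (jm + 1 + k), (ρ.del l : ℝ) := by
      intro k
      induction k with
      | zero =>
        intro _
        rw [Nat.add_zero]
        rw [ρ.reset_eq jm x hjmr]
        simp
      | succ k ih =>
        intro hk
        have hk' : jm + 1 + k ≤ i := by omega
        have hlt : jm + 1 + k < i := by omega
        have hnr : x ∉ (ρ.tr (jm + 1 + k)).reset := hnor _ (by omega) hlt
        have := ρ.unreset_eq (jm + 1 + k) x hnr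
        have harr : jm + 1 + (k + 1) = (jm + 1 + k) + 1 := by omega
        rw [harr, this]
        push_cast
        rw [ih hk']
        rw [Finset.sum_Ico_succ_top (by omega)]
    have hv1 : (ρ.val i x : ℝ) = ∑ l ∈ Finset.Ico (jm + 1) i, (ρ.del l : ℝ) := by
      have h1 : jm + 1 + (i - (jm + 1)) = i := by omega
      have := hval (i - (jm + 1)) (by omega)
      rwa [h1] at this
    have hsum : (ρ.val i x : ℝ) + (ρ.del i : ℝ) = ∑ l ∈ Finset.Ico (jm + 1) (i + 1), (ρ.del l : ℝ) := by
      rw [hv1, Finset.sum_Ico_succ_top (by omega)]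
    rw [hsum]
    calc ∑ l ∈ Finset.Ico (jm + 1) (i + 1), (ρ.del l : ℝ)
        ≤ ∑ l ∈ Finset.Ico N0 (i + 1), (ρ.del l : ℝ) := by
          apply Finset.sum_le_sum_of_subset_of_nonneg
          · apply Finset.Ico_subset_Ico (by omega) (le_refl _)
          · intro l _ _; exact (ρ.del l).coe_nonneg
      _ < 1 := hN0 (i + 1)
  -- construct the slow path
  refine ⟨⟨fun m => if m ≤ N then ((π.node m).1, (π.node m).2, false)
                    else ((π.node (m - 1)).1, (π.node (m - 1)).2, true),
          fun m => if m < N then some (π.tr m)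
                   else if m = N then none else some (π.tr (m - 1)),
          ?_, ?_⟩, N + 1, ?_⟩
  · simp only [Nat.zero_le, if_pos]
    rw [π.init_node]
  · intro i
    rcases lt_trichotomy i N with hi | hi | hi
    · -- free part
      have h1 : i ≤ N := le_of_lt hi
      have h2 : i + 1 ≤ N := hi
      simp only [hi, if_pos, h1, h2]
      show SZGEdge A 𝔞 _ (some (π.tr i)) _
      refine ⟨?_, rfl, ?_⟩
      · simpa using π.step i
      · intro hcontra
        simp at hcontra
    · -- the τ step
      subst hi
      have h1 : N ≤ N := le_refl N
      have h2 : ¬ (N + 1 ≤ N) := by omega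
      have h3 : ¬ (N < N) := by omega
      have h4 : N + 1 - 1 = N := by omega
      simp only [h1, if_pos, h2, if_neg, h3, if_neg, if_pos rfl, h4]
      show SZGEdge A 𝔞 _ none _
      exact ⟨rfl, rfl, rfl, rfl⟩
    · -- slow part
      have h1 : ¬ (i ≤ N) := by omega
      have h2 : ¬ (i + 1 ≤ N) := by omega
      have h3 : ¬ (i < N) := by omega
      have h4 : i ≠ N := by omega
      have h5 : i - 1 + 1 = i := by omega
      have h6 : i + 1 - 1 = i := by omega
      simp only [h1, if_neg, h2, h3, h4, if_false, h6]
      show SZGEdge A 𝔞 ((π.node (i-1)).1, (π.node (i-1)).2, true) (some (π.tr (i - 1)))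
        ((π.node i).1, (π.node i).2, true)
      refine ⟨?_, rfl, ?_⟩
      · have := π.step (i - 1)
        rw [h5] at this
        simpa using this
      · intro _ x hx
        have hN1 : N ≤ i - 1 := by omega
        have hx' : x ∈ (ρ.tr (i-1)).reset := by rw [htr (i-1)]; exact hx
        refine ⟨fun y => ρ.val (i-1) y + ρ.del (i-1), hinv (i-1) (ρ.del (i-1)), ?_, ?_⟩
        · rw [← htr (i-1)]; exact ρ.guard_sat (i-1)
        · have := key (i-1) hN1 x hx'
          push_cast
          linarith
  · intro i hi
    have hiN : ¬ (i ≤ N) := by omega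
    simp [hiN]

/-! ### the slow reparametrisation function -/

noncomputable def slowf (M : ℝ) (e : ℝ) : ℝ := if e ≤ M then e else (M + 1) - 1 / (1 + e - M)

lemma slowf_id {M e : ℝ} (h : e ≤ M) : slowf M e = e := if_pos h

lemma slowf_zero {M : ℝ} (hM : 0 ≤ M) : slowf M 0 = 0 := slowf_id hM

lemma slowf_gt {M e : ℝ} (h : M < e) : M < slowf M e ∧ slowf M e < M + 1 := by
  unfold slowf
  rw [if_neg (by linarith)]
  have h1 : (1 : ℝ) < 1 + e - M := by linarith
  have h2 : 0 < 1 / (1 + e - M) := by positivity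
  have h3 : 1 / (1 + e - M) < 1 := by
    rw [div_lt_one (by linarith)]
    linarith
  constructor <;> linarith

lemma slowf_le_self {M e : ℝ} : slowf M e ≤ e := by
  unfold slowf
  by_cases h : e ≤ M
  · rw [if_pos h]
  · rw [if_neg h]
    push_neg at h
    have h1 : (1 : ℝ) < 1 + e - M := by linarith
    have key : 1 - 1 / (1 + e - M) ≤ e - M := by
      have : 1 - 1 / (1 + e - M) = (e - M) / (1 + e - M) := by
        field_simp
        ring
      rw [this]
      exact div_le_self (by linarith) (by linarith)
    linarith

lemma slowf_lt_top {M e : ℝ} (hM : 0 ≤ M) : slowf M e < M + 1 := by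
  unfold slowf
  by_cases h : e ≤ M
  · rw [if_pos h]; linarith
  · rw [if_neg h]
    push_neg at h
    have h1 : (1 : ℝ) < 1 + e - M := by linarith
    have h2 : 0 < 1 / (1 + e - M) := by positivity
    linarith

lemma slowf_strictMono {M : ℝ} : StrictMono (slowf M) := by
  intro a b hab
  unfold slowf
  by_cases ha : a ≤ M <;> by_cases hb : b ≤ M
  · rw [if_pos ha, if_pos hb]; exact hab
  · rw [if_pos ha, if_neg hb]
    push_neg at hb
    have := (slowf_gt (M := M) (e := b) hb).1
    unfold slowf at this
    rw [if_neg (by linarith)] at this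
    linarith
  · exact absurd (le_trans (le_of_lt hab) hb) ha
  · rw [if_neg ha, if_neg hb]
    push_neg at ha hb
    have h1 : (0 : ℝ) < 1 + a - M := by linarith
    have h2 : 1 + a - M < 1 + b - M := by linarith
    have := one_div_lt_one_div_of_lt h1 h2
    linarith

lemma slowf_lip {M a b : ℝ} (hab : a ≤ b) : slowf M b - slowf M a ≤ b - a := by
  unfold slowf
  by_cases ha : a ≤ M <;> by_cases hb : b ≤ M
  · rw [if_pos ha, if_pos hb]
  · rw [if_pos ha, if_neg hb]
    push_neg at hb
    have h1 : (1 : ℝ) < 1 + b - M := by linarith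
    have key : 1 - 1 / (1 + b - M) ≤ b - M := by
      have : 1 - 1 / (1 + b - M) = (b - M) / (1 + b - M) := by field_simp; ring
      rw [this]
      exact div_le_self (by linarith) (by linarith)
    linarith
  · exact absurd (le_trans hab hb) ha
  · rw [if_neg ha, if_neg hb]
    push_neg at ha hb
    have h1 : (0 : ℝ) < 1 + a - M := by linarith
    have h2 : (0 : ℝ) < 1 + b - M := by linarith
    have key : 1 / (1 + a - M) - 1 / (1 + b - M) = (b - a) / ((1 + a - M) * (1 + b - M)) := by
      field_simp
      try ring
    have key2 : (b - a) / ((1 + a - M) * (1 + b - M)) ≤ b - a := by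
      apply div_le_self (by linarith)
      nlinarith
    linarith

lemma slowf_mono {M : ℝ} : Monotone (slowf M) := slowf_strictMono.monotone

/-- bound on all guard constants of an automaton -/
lemma guard_bound (A : TA Q C) :
    ∃ M : ℝ, 0 ≤ M ∧ ∀ t ∈ A.trans, ∀ cc ∈ t.guard, (cc.bound : ℝ) ≤ M := by
  have hfin : (⋃ t ∈ A.trans, {n : ℕ | ∃ cc ∈ t.guard, cc.bound = n}).Finite := by
    apply Set.Finite.biUnion A.finite_trans
    intro t _
    have : {n : ℕ | ∃ cc ∈ t.guard, cc.bound = n} =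
        (fun cc : ClockConstraint C => cc.bound) '' {cc | cc ∈ t.guard} := by
      ext n
      simp [Set.mem_image]
    rw [this]
    exact (t.guard.finite_toSet).image _
  obtain ⟨m, hm⟩ := hfin.bddAbove
  refine ⟨(m : ℝ), Nat.cast_nonneg m, fun t ht cc hcc => ?_⟩
  have : cc.bound ∈ ⋃ t ∈ A.trans, {n : ℕ | ∃ cc ∈ t.guard, cc.bound = n} :=
    Set.mem_biUnion ht ⟨cc, hcc, rfl⟩
  exact_mod_cast hm this

/-! ### structure of slow paths -/

lemma szg_struct (A : TA Q C) (𝔞 : Abstr C) (π : SZGPath A 𝔞) (hs : π.Slow) :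
    ∃ K : ℕ, π.lbl K = none ∧
      (∀ m, m ≤ K → (π.node m).2.2 = false) ∧
      (∀ m, K < m → (π.node m).2.2 = true) ∧
      (∀ m, m ≠ K → ∃ t, π.lbl m = some t) ∧
      (π.node (K + 1)).1 = (π.node K).1 ∧ (π.node (K + 1)).2.1 = (π.node K).2.1 := by
  classical
  obtain ⟨N₀, hN₀⟩ := hs
  have hP : ∃ m, (π.node m).2.2 = true := ⟨N₀, hN₀ N₀ le_rfl⟩
  set K1 := Nat.find hP with hK1
  have hK1spec : (π.node K1).2.2 = true := Nat.find_spec hP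
  have hflag0 : (π.node 0).2.2 = false := by rw [π.init_node]
  have hK1pos : K1 ≠ 0 := by
    intro h
    rw [h] at hK1spec
    rw [hflag0] at hK1spec
    exact Bool.false_ne_true hK1spec
  set K := K1 - 1 with hKdef
  have hKK1 : K + 1 = K1 := by omega
  have hfalse : ∀ m, m ≤ K → (π.node m).2.2 = false := by
    intro m hm
    have hmlt : m < Nat.find hP := by rw [← hK1]; omega
    have hnot := Nat.find_min hP hmlt
    cases h : (π.node m).2.2
    · rfl
    · exact absurd h hnot
  have htrue1 : ∀ m, K1 ≤ m → (π.node m).2.2 = true := by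
    intro m hm
    induction m, hm using Nat.le_induction with
    | base => exact hK1spec
    | succ n hn ih =>
      have hstep := π.step n
      cases hlbl : π.lbl n with
      | none =>
        rw [hlbl] at hstep
        exact absurd hstep.1 (by rw [ih]; simp)
      | some t =>
        rw [hlbl] at hstep
        rw [hstep.2.1]
        exact ih
  have htrue : ∀ m, K < m → (π.node m).2.2 = true := fun m hm => htrue1 m (by omega)
  have hlblK : π.lbl K = none := by
    cases hlbl : π.lbl K with
    | none => rfl
    | some t =>
      have hstep := π.step K
      rw [hlbl] at hstep
      have h1 := hstep.2.1
      rw [htrue (K + 1) (Nat.lt_succ_self K), hfalse K le_rfl] at h1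
      exact absurd h1 (by simp)
  have hsome : ∀ m, m ≠ K → ∃ t, π.lbl m = some t := by
    intro m hm
    cases hlbl : π.lbl m with
    | some t => exact ⟨t, rfl⟩
    | none =>
      have hstep := π.step m
      rw [hlbl] at hstep
      rcases Nat.lt_or_ge m K with h | h
      · have h1 : (π.node (m + 1)).2.2 = false := hfalse (m + 1) (by omega)
        rw [hstep.2.2.2] at h1
        exact absurd h1 (by simp)
      · have hmK : K < m := by omega
        have h2 := hstep.1
        rw [htrue m hmK] at h2
        exact absurd h2 (by simp)
  have hstepK := π.step K
  rw [hlblK] at hstepK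
  exact ⟨K, hlblK, hfalse, htrue, hsome, hstepK.2.1, hstepK.2.2.1⟩

/-- project a slow SZG path to an AZG path, keeping the slow-reset witnesses -/
lemma szg_to_azg (A : TA Q C) (𝔞 : Abstr C) (π : SZGPath A 𝔞) (hs : π.Slow) :
    ∃ (π' : AZGPath A 𝔞) (K : ℕ), ∀ i, K ≤ i →
      ∀ x ∈ (π'.tr i).reset, ∃ v ∈ (π'.node i).2,
        GSat v (π'.tr i).guard ∧ (v x : ℝ) < 1 := by
  classical
  obtain ⟨K, hlblK, hfalse, htrue, hsome, hq, hZ⟩ := szg_struct A 𝔞 π hs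
  set tdef : Transition Q C := ⟨A.init, [], ∅, A.init⟩ with htdef
  set nodef : ℕ → Q × Set (Val C) := fun i =>
    if i ≤ K then ((π.node i).1, (π.node i).2.1)
    else ((π.node (i+1)).1, (π.node (i+1)).2.1) with hnodef
  set trf : ℕ → Transition Q C := fun i =>
    (π.lbl (if i < K then i else i + 1)).getD tdef with htrf
  have hinit : nodef 0 = (A.init, 𝔞 (ZoneInit C)) := by
    rw [hnodef]
    simp only [Nat.zero_le, if_pos]
    rw [π.init_node]
  have hstep : ∀ i, AZGEdge A 𝔞 (nodef i) (trf i) (nodef (i+1)) := by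
    intro i
    rcases lt_trichotomy i K with hi | hi | hi
    · obtain ⟨t, ht⟩ := hsome i (by omega)
      have hstepi := π.step i
      rw [ht] at hstepi
      have h1 : nodef i = ((π.node i).1, (π.node i).2.1) := by
        rw [hnodef]; simp [le_of_lt hi]
      have h2 : nodef (i+1) = ((π.node (i+1)).1, (π.node (i+1)).2.1) := by
        rw [hnodef]; simp [show i + 1 ≤ K by omega]
      have h3 : trf i = t := by rw [htrf]; simp [hi, ht]
      rw [h1, h2, h3]
      exact hstepi.1
    · subst hi
      obtain ⟨t, ht⟩ := hsome (i+1) (by omega)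
      have hstepi := π.step (i+1)
      rw [ht] at hstepi
      have h1 : nodef i = ((π.node (i+1)).1, (π.node (i+1)).2.1) := by
        rw [hnodef]
        simp only [le_refl, if_pos]
        rw [hq, hZ]
      have h2 : nodef (i+1) = ((π.node (i+2)).1, (π.node (i+2)).2.1) := by
        rw [hnodef]; simp [show ¬ (i + 1 ≤ i) by omega]
      have h3 : trf i = t := by rw [htrf]; simp [show ¬ (i < i) by omega, ht]
      rw [h1, h2, h3]
      exact hstepi.1
    · obtain ⟨t, ht⟩ := hsome (i+1) (by omega)
      have hstepi := π.step (i+1)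
      rw [ht] at hstepi
      have h1 : nodef i = ((π.node (i+1)).1, (π.node (i+1)).2.1) := by
        rw [hnodef]; simp [show ¬ (i ≤ K) by omega]
      have h2 : nodef (i+1) = ((π.node (i+2)).1, (π.node (i+2)).2.1) := by
        rw [hnodef]; simp [show ¬ (i + 1 ≤ K) by omega]
      have h3 : trf i = t := by rw [htrf]; simp [show ¬ (i < K) by omega, ht]
      rw [h1, h2, h3]
      exact hstepi.1
  refine ⟨⟨nodef, trf, hinit, hstep⟩, K, ?_⟩
  intro i hi x hx
  obtain ⟨t, ht⟩ := hsome (i+1) (by omega)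
  have hstepi := π.step (i+1)
  rw [ht] at hstepi
  have h3 : trf i = t := by rw [htrf]; simp [show ¬ (i < K) by omega, ht]
  have hZeq : (π.node (i+1)).2.1 = (nodef i).2 := by
    rcases eq_or_lt_of_le hi with he | hlt
    · subst he
      have hni : nodef K = ((π.node K).1, (π.node K).2.1) := by
        rw [hnodef]; simp
      rw [hni]
      exact hZ
    · rw [hnodef]
      simp [show ¬ (i ≤ K) by omega]
  have hslowc := hstepi.2.2 (htrue (i+1) (by omega))
  simp only at hx
  rw [h3] at hx
  obtain ⟨v, hv, hvg, hvx⟩ := hslowc x hx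
  simp only at *
  rw [h3]
  exact ⟨v, hZeq ▸ hv, hvg, hvx⟩

/-- Direction 2: a slow path yields a Zeno run. -/
lemma slow_to_zeno (A : TA Q C) (𝔞 : Abstr C)
    (hfin : IsFiniteAbstraction 𝔞) (hsound : SoundAbs A 𝔞) (hls : LiftSafe A 𝔞)
    (hsl : ∃ π : SZGPath A 𝔞, π.Slow) : HasZenoRun A := by
  classical
  obtain ⟨π0, hπ0⟩ := hsl
  obtain ⟨π, K, hslow⟩ := szg_to_azg A 𝔞 π0 hπ0
  obtain ⟨ρ, hinst⟩ := hsound π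
  have htr : ∀ i, ρ.tr i = π.tr i := hinst.1
  have hzone : ∀ i, IsZone (π.node i).2 := azg_zones A 𝔞 hfin π
  -- the lift lemma: a clock whose 1-bound is checked in the slow part is never reset afterwards
  have hlift : ∀ i, K ≤ i → ∀ x : C,
      (∀ v : Val C, GSat v (ρ.tr i).guard → 1 ≤ (v x : ℝ)) →
      ∀ m, i < m → x ∉ (ρ.tr m).reset := by
    intro i hi x himp
    have hxLf : x ∈ Lf A := ⟨ρ.tr i, ρ.mem i, himp⟩
    have hxnr : x ∉ (π.tr i).reset := by
      intro hx
      obtain ⟨v, _, hvg, hvx⟩ := hslow i hi x hx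
      have := himp v (by rwa [htr i])
      linarith
    have hinv : ∀ k, ∀ v ∈ (π.node (i + 1 + k)).2, 1 ≤ (v x : ℝ) := by
      intro k
      induction k with
      | zero =>
        obtain ⟨hfix, hmem, hsrc, htgt, hne, hZ'⟩ := π.step i
        rw [Nat.add_zero, hZ']
        have hall : ∀ v ∈ post (π.tr i) (π.node i).2, 1 ≤ (v x : ℝ) := by
          rintro v' ⟨v, hvZ, δ, hG, hR, hNR⟩
          rw [hNR x hxnr]
          have h1 := himp v (by rwa [htr i])
          push_cast
          have := δ.coe_nonneg
          linarith
        exact (hls _ (isZone_post _ _ (hzone i)) x hxLf).1 hall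
      | succ k ih =>
        have hmK : K ≤ i + 1 + k := by omega
        have hxnrm : x ∉ (π.tr (i + 1 + k)).reset := by
          intro hx
          obtain ⟨v, hv, _, hvx⟩ := hslow (i + 1 + k) hmK x hx
          have := ih v hv
          linarith
        obtain ⟨hfix, hmem, hsrc, htgt, hne, hZ'⟩ := π.step (i + 1 + k)
        have harr : i + 1 + (k + 1) = (i + 1 + k) + 1 := by omega
        rw [harr, hZ']
        have hall : ∀ v ∈ post (π.tr (i + 1 + k)) (π.node (i + 1 + k)).2, 1 ≤ (v x : ℝ) := by
          rintro v' ⟨v, hvZ, δ, hG, hR, hNR⟩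
          rw [hNR x hxnrm]
          have h1 := ih v hvZ
          push_cast
          have := δ.coe_nonneg
          linarith
        exact (hls _ (isZone_post _ _ (hzone (i + 1 + k))) x hxLf).1 hall
    intro m him hxm
    have hmK : K ≤ m := by omega
    have hxnrm : x ∉ (π.tr m).reset := by
      intro hx
      obtain ⟨v, hv, _, hvx⟩ := hslow m hmK x hx
      have harr : i + 1 + (m - (i + 1)) = m := by omega
      have := hinv (m - (i + 1)) v (by rwa [harr])
      linarith
    exact hxnrm (by rwa [htr m] at hxm)
  -- choose K' beyond the last reset of every finitely-reset clock
  have hKx : ∀ x : C, ∃ n : ℕ, ¬ {i | x ∈ (ρ.tr i).reset}.Infinite →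
      ∀ m, n ≤ m → x ∉ (ρ.tr m).reset := by
    intro x
    by_cases hx : {i | x ∈ (ρ.tr i).reset}.Infinite
    · exact ⟨0, fun h => absurd hx h⟩
    · obtain ⟨b, hb⟩ := (Set.not_infinite.mp hx).bddAbove
      exact ⟨b + 1, fun _ m hm hmem => by have := hb hmem; omega⟩
  choose kf hkf using hKx
  set K' := (Finset.univ.sup kf) ⊔ K with hK'
  have hKK' : K ≤ K' := le_sup_right
  have hkfK' : ∀ x, kf x ≤ K' :=
    fun x => le_trans (Finset.le_sup (Finset.mem_univ x)) le_sup_left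
  -- no clock checked against a positive constant after K' is ever reset after K'
  have hnolift : ∀ j, K' ≤ j → ∀ x : C,
      (∀ v : Val C, GSat v (ρ.tr j).guard → 1 ≤ (v x : ℝ)) →
      ∀ m, K' ≤ m → x ∉ (ρ.tr m).reset := by
    intro j hj x himp m hm hxm
    by_cases hxi : {i | x ∈ (ρ.tr i).reset}.Infinite
    · obtain ⟨m', hm'mem, hm'gt⟩ := hxi.exists_gt j
      exact hlift j (le_trans hKK' hj) x himp m' hm'gt hm'mem
    · exact hkf x hxi m (le_trans (hkfK' x) hm) hxm
  -- bound on guard constants and cumulative times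
  obtain ⟨Mb, hMb0, hMbB⟩ := guard_bound A
  set cA : ℕ → ℝ := fun j => ∑ l ∈ Finset.Ico K' j, (ρ.del l : ℝ) with hcA
  have hcA0 : cA K' = 0 := by rw [hcA]; simp
  have hcAsucc : ∀ j, K' ≤ j → cA (j + 1) = cA j + (ρ.del j : ℝ) := by
    intro j hj
    rw [hcA]
    simp only
    rw [Finset.sum_Ico_succ_top hj]
  have hcAmono : ∀ {a b : ℕ}, a ≤ b → cA a ≤ cA b := by
    intro a b hab
    rw [hcA]
    simp only
    apply Finset.sum_le_sum_of_subset_of_nonneg (Finset.Ico_subset_Ico le_rfl hab)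
    intro l _ _
    positivity
  -- the new delays
  set del' : ℕ → NNReal := fun j =>
    if j < K' then ρ.del j
    else Real.toNNReal (slowf Mb (cA (j + 1)) - slowf Mb (cA j)) with hdel
  have hdel'coe : ∀ j, K' ≤ j → (del' j : ℝ) = slowf Mb (cA (j + 1)) - slowf Mb (cA j) := by
    intro j hj
    rw [hdel]
    simp only [if_neg (show ¬ j < K' by omega)]
    exact Real.coe_toNNReal _ (sub_nonneg.2 (slowf_mono (hcAmono (Nat.le_succ j))))
  have hdel'low : ∀ j, j < K' → del' j = ρ.del j := by
    intro j hj
    rw [hdel]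
    simp [hj]
  -- the new valuations
  set V : ℕ → Val C := fun n => Nat.rec (motive := fun _ => Val C) (fun _ => 0)
    (fun j Vj => fun x => if x ∈ (ρ.tr j).reset then 0 else Vj x + del' j) n with hVdef
  have hV0 : ∀ x, V 0 x = 0 := fun _ => rfl
  have hVsucc : ∀ j x, V (j + 1) x = if x ∈ (ρ.tr j).reset then 0 else V j x + del' j :=
    fun _ _ => rfl
  have hVlow : ∀ j, j ≤ K' → V j = ρ.val j := by
    intro j
    induction j with
    | zero =>
      intro _
      funext x
      rw [hV0 x, ρ.init_val x]
    | succ j ih =>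
      intro hj
      have hj' : j ≤ K' := by omega
      have hjlt : j < K' := by omega
      funext x
      rw [hVsucc j x, hdel'low j hjlt, ih hj']
      by_cases hx : x ∈ (ρ.tr j).reset
      · rw [if_pos hx, ρ.reset_eq j x hx]
      · rw [if_neg hx, ρ.unreset_eq j x hx]
  -- the anchor invariant
  have hanchor : ∀ j, K' ≤ j → ∀ x : C, ∃ a : ℝ, a ≤ cA j ∧
      (ρ.val j x : ℝ) = cA j - a ∧ (V j x : ℝ) = slowf Mb (cA j) - slowf Mb a ∧
      ((∀ m, K' ≤ m → m < j → x ∉ (ρ.tr m).reset) → a ≤ 0) := by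
    intro j hj
    induction j, hj using Nat.le_induction with
    | base =>
      intro x
      refine ⟨-(ρ.val K' x : ℝ), ?_, ?_, ?_, fun _ => ?_⟩
      · rw [hcA0]
        have := (ρ.val K' x).coe_nonneg
        linarith
      · rw [hcA0]; ring
      · rw [hVlow K' le_rfl, hcA0, slowf_zero hMb0,
          slowf_id (show -(ρ.val K' x : ℝ) ≤ Mb by have := (ρ.val K' x).coe_nonneg; linarith)]
        ring
      · have := (ρ.val K' x).coe_nonneg
        linarith
    | succ j hj ih =>
      intro x
      obtain ⟨a, h1, h2, h3, h4⟩ := ih x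
      by_cases hx : x ∈ (ρ.tr j).reset
      · refine ⟨cA (j + 1), le_rfl, ?_, ?_, ?_⟩
        · rw [ρ.reset_eq j x hx]
          simp
        · rw [hVsucc j x, if_pos hx]
          simp
        · intro h
          exact absurd hx (h j hj (Nat.lt_succ_self j))
      · refine ⟨a, le_trans h1 (hcAmono (Nat.le_succ j)), ?_, ?_, ?_⟩
        · rw [ρ.unreset_eq j x hx]
          push_cast
          rw [h2, hcAsucc j hj]
          ring
        · rw [hVsucc j x, if_neg hx]
          push_cast
          rw [h3, hdel'coe j hj]
          ring
        · intro h
          exact h4 (fun m hm hmj => h m hm (by omega))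
  -- guard satisfaction for the new run
  have hgs : ∀ j, GSat (fun x => V j x + del' j) (ρ.tr j).guard := by
    intro j
    rcases Nat.lt_or_ge j K' with hj | hj
    · have hV : V j = ρ.val j := hVlow j (le_of_lt hj)
      have hd : del' j = ρ.del j := hdel'low j hj
      rw [hV, hd]
      exact ρ.guard_sat j
    · intro cc hcc
      obtain ⟨a, h1, h2, h3, h4⟩ := hanchor j hj cc.clock
      have hae : a ≤ cA (j + 1) := le_trans h1 (hcAmono (Nat.le_succ j))
      have hourval : (((fun x => V j x + del' j) cc.clock : NNReal) : ℝ)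
          = slowf Mb (cA (j + 1)) - slowf Mb a := by
        show ((V j cc.clock + del' j : NNReal) : ℝ) = _
        push_cast
        rw [h3, hdel'coe j hj]
        ring
      have hrho := ρ.guard_sat j cc hcc
      have hrhoval : (((fun x => ρ.val j x + ρ.del j) cc.clock : NNReal) : ℝ)
          = cA (j + 1) - a := by
        show ((ρ.val j cc.clock + ρ.del j : NNReal) : ℝ) = _
        push_cast
        rw [h2, hcAsucc j hj]
        ring
      rw [hrhoval] at hrho
      rw [hourval]
      have hbMb : (cc.bound : ℝ) ≤ Mb := hMbB (ρ.tr j) (ρ.mem j) cc hcc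
      have ha0 : (∀ v : Val C, GSat v (ρ.tr j).guard → 1 ≤ (v cc.clock : ℝ)) → a ≤ 0 := by
        intro himp
        exact h4 (fun m hm _ => hnolift j hj cc.clock himp m hm)
      have hflip : slowf Mb (cA (j + 1)) - slowf Mb a ≤ cA (j + 1) - a := by
        have := slowf_lip (M := Mb) hae
        linarith
      cases hcmp : cc.cmp with
      | lt =>
        rw [hcmp] at hrho
        show slowf Mb (cA (j + 1)) - slowf Mb a < (cc.bound : ℝ)
        have : cA (j + 1) - a < (cc.bound : ℝ) := hrho
        linarith
      | le =>
        rw [hcmp] at hrho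
        show slowf Mb (cA (j + 1)) - slowf Mb a ≤ (cc.bound : ℝ)
        have : cA (j + 1) - a ≤ (cc.bound : ℝ) := hrho
        linarith
      | eq =>
        rw [hcmp] at hrho
        have heq : cA (j + 1) - a = (cc.bound : ℝ) := hrho
        show slowf Mb (cA (j + 1)) - slowf Mb a = (cc.bound : ℝ)
        rcases Nat.eq_zero_or_pos cc.bound with hb | hb
        · rw [hb] at heq ⊢
          push_cast at heq ⊢
          have : cA (j + 1) = a := by linarith
          rw [this]
          ring
        · have himp : ∀ v : Val C, GSat v (ρ.tr j).guard → 1 ≤ (v cc.clock : ℝ) := by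
            intro v hv
            have := hv cc hcc
            rw [hcmp] at this
            unfold Cmp.holds at this
            rw [this]
            exact_mod_cast Nat.one_le_cast.2 hb
          have haneg := ha0 himp
          have hesmall : cA (j + 1) ≤ Mb := by
            have : cA (j + 1) = (cc.bound : ℝ) + a := by linarith
            linarith
          rw [slowf_id hesmall, slowf_id (le_trans haneg hMb0)]
          exact heq
      | ge =>
        rw [hcmp] at hrho
        have hge : cA (j + 1) - a ≥ (cc.bound : ℝ) := hrho
        show slowf Mb (cA (j + 1)) - slowf Mb a ≥ (cc.bound : ℝ)
        rcases Nat.eq_zero_or_pos cc.bound with hb | hb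
        · rw [hb]
          push_cast
          have := slowf_mono (M := Mb) hae
          linarith
        · have himp : ∀ v : Val C, GSat v (ρ.tr j).guard → 1 ≤ (v cc.clock : ℝ) := by
            intro v hv
            have := hv cc hcc
            rw [hcmp] at this
            unfold Cmp.holds at this
            calc (1 : ℝ) ≤ (cc.bound : ℝ) := by exact_mod_cast Nat.one_le_cast.2 hb
              _ ≤ _ := this
          have haneg := ha0 himp
          rw [slowf_id (le_trans haneg hMb0)]
          by_cases he : cA (j + 1) ≤ Mb
          · rw [slowf_id he]
            exact hge
          · push_neg at he
            have := (slowf_gt (M := Mb) he).1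
            linarith
      | gt =>
        rw [hcmp] at hrho
        have hgt : cA (j + 1) - a > (cc.bound : ℝ) := hrho
        show slowf Mb (cA (j + 1)) - slowf Mb a > (cc.bound : ℝ)
        rcases Nat.eq_zero_or_pos cc.bound with hb | hb
        · rw [hb]
          push_cast
          have halt : a < cA (j + 1) := by
            push_cast at hgt
            rw [hb] at hgt
            push_cast at hgt
            linarith
          have := slowf_strictMono (M := Mb) halt
          linarith
        · have himp : ∀ v : Val C, GSat v (ρ.tr j).guard → 1 ≤ (v cc.clock : ℝ) := by
            intro v hv
            have := hv cc hcc
            rw [hcmp] at this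
            unfold Cmp.holds at this
            have h1 : (1 : ℝ) ≤ (cc.bound : ℝ) := by exact_mod_cast Nat.one_le_cast.2 hb
            linarith
          have haneg := ha0 himp
          rw [slowf_id (le_trans haneg hMb0)]
          by_cases he : cA (j + 1) ≤ Mb
          · rw [slowf_id he]
            exact hgt
          · push_neg at he
            have := (slowf_gt (M := Mb) he).1
            linarith
  -- assemble the Zeno run
  refine ⟨⟨ρ.st, V, del', ρ.tr, ρ.init_st, hV0, ρ.mem, ρ.src_eq, ρ.tgt_eq, hgs,
      fun i x hx => by rw [hVsucc i x]; exact if_pos hx,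
      fun i x hx => by rw [hVsucc i x]; exact if_neg hx⟩, ?_⟩
  -- Zenoness
  refine ⟨(∑ l ∈ Finset.range K', (ρ.del l : ℝ)) + (Mb + 1), ?_⟩
  intro n
  show ∑ i ∈ Finset.range n, (del' i : ℝ) ≤ _
  have htel : ∀ m, K' ≤ m → ∑ l ∈ Finset.Ico K' m, (del' l : ℝ) = slowf Mb (cA m) := by
    intro m hm
    induction m, hm using Nat.le_induction with
    | base =>
      rw [Finset.Ico_self, Finset.sum_empty, hcA0, slowf_zero hMb0]
    | succ m hm ih =>
      rw [Finset.sum_Ico_succ_top hm, ih, hdel'coe m hm]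
      ring
  rcases Nat.lt_or_ge n K' with hn | hn
  · have hsum : ∑ i ∈ Finset.range n, (del' i : ℝ) = ∑ i ∈ Finset.range n, (ρ.del i : ℝ) := by
      apply Finset.sum_congr rfl
      intro l hl
      rw [hdel'low l (lt_of_lt_of_le (Finset.mem_range.1 hl) (le_of_lt hn))]
    rw [hsum]
    have h1 : ∑ i ∈ Finset.range n, (ρ.del i : ℝ) ≤ ∑ i ∈ Finset.range K', (ρ.del i : ℝ) := by
      apply Finset.sum_le_sum_of_subset_of_nonneg (Finset.range_subset_range.2 (le_of_lt hn))
      intro l _ _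
      positivity
    linarith
  · rw [Finset.range_eq_Ico, ← Finset.sum_Ico_consecutive _ (Nat.zero_le K') hn]
    have hpre : ∑ l ∈ Finset.Ico 0 K', (del' l : ℝ) = ∑ l ∈ Finset.Ico 0 K', (ρ.del l : ℝ) := by
      apply Finset.sum_congr rfl
      intro l hl
      rw [hdel'low l (Finset.mem_Ico.1 hl).2]
    rw [hpre, htel n hn]
    have h2 : slowf Mb (cA n) < Mb + 1 := slowf_lt_top hMb0
    rw [← Finset.range_eq_Ico]
    linarith

/-- reachable abstract zone graph nodes carry zones in the range of the abstraction -/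
lemma azg_reach_zone (A : TA Q C) (𝔞 : Abstr C) (hfin : IsFiniteAbstraction 𝔞) :
    ∀ s, AZGReach A 𝔞 s → IsZone s.2 ∧ s.2 ∈ {W : Set (Val C) | ∃ Z, IsZone Z ∧ 𝔞 Z = W} := by
  intro s hs
  induction hs with
  | refl =>
    exact ⟨(hfin.1 _ isZone_ZoneInit).1, ⟨ZoneInit C, isZone_ZoneInit, rfl⟩⟩
  | tail hab hbc ih =>
    obtain ⟨t, hfix, hmem, hsrc, htgt, hne, hZ'⟩ := hbc
    have hp := isZone_post t _ ih.1
    rw [hZ']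
    exact ⟨(hfin.1 _ hp).1, ⟨_, hp, rfl⟩⟩

lemma azg_reach_finite (A : TA Q C) (𝔞 : Abstr C) (hfin : IsFiniteAbstraction 𝔞) :
    { s : Q × Set (Val C) | AZGReach A 𝔞 s }.Finite := by
  apply Set.Finite.subset ((Set.finite_univ (α := Q)).prod hfin.2)
  intro s hs
  exact ⟨trivial, (azg_reach_zone A 𝔞 hfin s hs).2⟩

lemma szg_reach_proj (A : TA Q C) (𝔞 : Abstr C) :
    ∀ s, SZGReach A 𝔞 s → AZGReach A 𝔞 (s.1, s.2.1) := by
  intro s hs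
  induction hs with
  | refl => exact Relation.ReflTransGen.refl
  | tail hab hbc ih =>
    obtain ⟨l, hl⟩ := hbc
    cases l with
    | some t => exact Relation.ReflTransGen.tail ih ⟨t, hl.1⟩
    | none =>
      have h1 := hl.2.1
      have h2 := hl.2.2.1
      rw [show (_root_.Prod.mk _ _ : Q × Set (Val C)) = _ from congrArg₂ Prod.mk h1 h2]
      exact ih

lemma szg_card (A : TA Q C) (𝔞 : Abstr C) (hfin : IsFiniteAbstraction 𝔞) :
    { s : Q × Set (Val C) × Bool | SZGReach A 𝔞 s }.ncard ≤
      2 * { s : Q × Set (Val C) | AZGReach A 𝔞 s }.ncard := by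
  classical
  set SA := { s : Q × Set (Val C) | AZGReach A 𝔞 s } with hSA
  set SS := { s : Q × Set (Val C) × Bool | SZGReach A 𝔞 s } with hSS
  set F : Q × Set (Val C) × Bool → (Q × Set (Val C)) × Bool :=
    fun s => ((s.1, s.2.1), s.2.2) with hF
  have hinj : Function.Injective F := by
    rintro ⟨q, Z, b⟩ ⟨q', Z', b'⟩ hab
    simp only [hF, Prod.mk.injEq] at hab
    obtain ⟨⟨h1, h2⟩, h3⟩ := hab
    simp [h1, h2, h3]
  have himg : F '' SS ⊆ SA ×ˢ (Set.univ : Set Bool) := by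
    rintro _ ⟨s, hs, rfl⟩
    exact ⟨szg_reach_proj A 𝔞 s hs, trivial⟩
  have hfinSA : SA.Finite := azg_reach_finite A 𝔞 hfin
  have hprod : (SA ×ˢ (Set.univ : Set Bool)).ncard = SA.ncard * 2 := by
    rw [← Nat.card_coe_set_eq, ← Nat.card_coe_set_eq]
    rw [Nat.card_congr (Equiv.Set.prod _ _)]
    rw [Nat.card_prod]
    congr 1
    rw [Nat.card_congr (Equiv.Set.univ Bool)]
    simp [Nat.card_eq_fintype_card]
  calc SS.ncard = (F '' SS).ncard := (Set.ncard_image_of_injective _ hinj).symm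
    _ ≤ (SA ×ˢ (Set.univ : Set Bool)).ncard :=
        Set.ncard_le_ncard himg (hfinSA.prod (Set.finite_univ))
    _ = SA.ncard * 2 := hprod
    _ = 2 * SA.ncard := Nat.mul_comm _ _

end MainLemmas

/-- For a sound, complete, lift-safe finite abstraction `𝔞`, the
automaton `A` has a Zeno run iff `SZG^𝔞(A)` has an infinite slow path; moreover the
reachable part of `SZG^𝔞(A)` is at most twice the reachable part of `ZG^𝔞(A)`. -/
theorem hasZenoRun_iff_szg_slow_path_and_size {Q C : Type} [Fintype Q] [Fintype C]
    (A : TA Q C) (𝔞 : Abstr C)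
    (hfin : IsFiniteAbstraction 𝔞) (hsound : SoundAbs A 𝔞) (hcomp : CompleteAbs A 𝔞)
    (hls : LiftSafe A 𝔞) :
    (HasZenoRun A ↔ ∃ π : SZGPath A 𝔞, π.Slow) ∧
    { s : Q × Set (Val C) × Bool | SZGReach A 𝔞 s }.ncard ≤
      2 * { s : Q × Set (Val C) | AZGReach A 𝔞 s }.ncard := by
  refine ⟨⟨fun hz => zeno_to_slow A 𝔞 hfin hcomp hz,
    fun hs => slow_to_zeno A 𝔞 hfin hsound hls hs⟩, szg_card A 𝔞 hfin⟩
end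

section
/- The extrapolation Extra_LU is not lift-safe: there exist a timed automaton A (with bound functions L, U derived from A), a clock x ∈ Lf(A), and a zone Z such that every valuation of Z satisfies x ≥ 1, yet some valuation of Extra_LU(Z) satisfies x < 1. The same holds for Extra⁺_LU. -/
/-! ### Auxiliary construction for Statement 16 -/

namespace NLS

/-- A single transition with guard `x ≥ 1`. -/
def t1 : Transition (Fin 1) (Fin 1) := ⟨0, [⟨0, Cmp.ge, 1⟩], ∅, 0⟩

/-- The witnessing automaton. -/
def A1 : TA (Fin 1) (Fin 1) := ⟨0, {t1}, Set.finite_singleton t1⟩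

def L1 : Fin 1 → ExtBound := fun _ => .fin 1
def U1 : Fin 1 → ExtBound := fun _ => .minf

/-- The zone `x ≥ 2`. -/
def Z1 : Set (Val (Fin 1)) := { v | 2 ≤ (v 0 : ℝ) }

/-- Its canonical DBM. -/
def D1 : DBM (Fin 1) := fun i j =>
  match i, j with
  | none, some _ => .bnd (-2) false
  | some _, none => .inf
  | _, _ => .bnd 0 false

lemma sat_mono {e : DBMEntry} {a d : ℝ} (h : e.sat a) (hd : d ≤ a) : e.sat d := by
  cases e with
  | inf => trivial
  | bnd c s =>
    cases s <;> simp only [DBMEntry.sat] at h ⊢ <;> linarith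

lemma hLF : IsLFun A1 L1 := by
  intro x
  right
  refine ⟨1, ⟨t1, rfl, ⟨0, Cmp.ge, 1⟩, List.mem_singleton_self _,
    Subsingleton.elim _ _, rfl, Or.inr rfl⟩, rfl, ?_⟩
  rintro c' ⟨t, ht, cc, hcc, -, hb, hcmp⟩
  have ht1 : t = t1 := ht
  subst ht1
  have : cc = ⟨0, Cmp.ge, 1⟩ := List.mem_singleton.mp hcc
  subst this
  simp at hb
  omega

lemma hUF : IsUFun A1 U1 := by
  intro x
  left
  refine ⟨?_, rfl⟩
  ext c
  simp only [UpperConsts, Set.mem_setOf_eq, Set.mem_empty_iff_false, iff_false]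
  rintro ⟨t, ht, cc, hcc, -, -, hcmp⟩
  have ht1 : t = t1 := ht
  subst ht1
  have : cc = ⟨0, Cmp.ge, 1⟩ := List.mem_singleton.mp hcc
  subst this
  rcases hcmp with h | h <;> simp at h

lemma hLf : (0 : Fin 1) ∈ Lf A1 := by
  refine ⟨t1, rfl, fun v hv => ?_⟩
  have := hv ⟨0, Cmp.ge, 1⟩ (List.mem_singleton_self _)
  simpa [Cmp.holds] using this

lemma fin1 (x : Fin 1) : x = 0 := Subsingleton.elim _ _

lemma hzone : dbmZone D1 = Z1 := by
  ext v
  constructor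
  · intro hv
    have := hv none (some 0)
    simp only [D1, DBMEntry.sat, ext0] at this
    simp only [Z1, Set.mem_setOf_eq]
    push_cast at this ⊢
    linarith
  · intro hv i j
    rcases i with _ | x <;> rcases j with _ | y
    · simp [D1, DBMEntry.sat, ext0]
    · rw [fin1 y]
      simp only [D1, DBMEntry.sat, ext0]
      simp only [Z1, Set.mem_setOf_eq] at hv
      push_cast
      linarith
    · simp [D1, DBMEntry.sat, ext0]
    · rw [fin1 x, fin1 y]
      simp [D1, DBMEntry.sat, ext0]

lemma hcan : IsCanonicalDBM Z1 D1 := by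
  refine ⟨⟨fun _ => 2, by simp [Z1]⟩, hzone, ?_⟩
  intro i j e he d hd
  rcases i with _ | x <;> rcases j with _ | y
  · -- i = j = none : diff is 0, D1 entry is (0, ≤)
    simp only [D1, DBMEntry.sat] at hd
    have h0 : e.sat 0 := by
      have := he (fun _ => 2) (by simp [Z1])
      simpa [ext0] using this
    exact sat_mono h0 (by exact_mod_cast hd)
  · -- i = none, j = some y
    rw [fin1 y] at *
    simp only [D1, DBMEntry.sat] at hd
    have hd' : d ≤ -2 := by exact_mod_cast hd
    have hv : (Real.toNNReal (-d) : ℝ) = -d := Real.coe_toNNReal _ (by linarith)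
    have := he (fun _ => Real.toNNReal (-d)) (by simp only [Z1, Set.mem_setOf_eq]; rw [hv]; linarith)
    simpa [ext0, hv] using this
  · -- i = some x, j = none : D1 entry is ∞
    rw [fin1 x] at *
    cases e with
    | inf => trivial
    | bnd c s =>
      exfalso
      set m : ℝ := max ((c : ℝ) + 1) 2 with hm
      have hm2 : (2 : ℝ) ≤ m := le_max_right _ _
      have hmc : (c : ℝ) + 1 ≤ m := le_max_left _ _
      have hvc : (Real.toNNReal m : ℝ) = m := Real.coe_toNNReal _ (by linarith)
      have := he (fun _ => Real.toNNReal m) (by simp only [Z1, Set.mem_setOf_eq]; rw [hvc]; linarith)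
      simp only [ext0, hvc, sub_zero] at this
      cases s <;> simp only [DBMEntry.sat] at this <;> linarith
  · -- i = some x, j = some y, both = 0
    rw [fin1 x, fin1 y] at *
    simp only [D1, DBMEntry.sat] at hd
    have h0 : e.sat 0 := by
      have := he (fun _ => 2) (by simp [Z1])
      simpa [ext0] using this
    exact sat_mono h0 (by exact_mod_cast hd)

lemma hge : ∀ v ∈ Z1, 1 ≤ ((v 0 : NNReal) : ℝ) := by
  intro v hv
  simp only [Z1, Set.mem_setOf_eq] at hv
  linarith

lemma hLUmem : (fun _ => 0 : Val (Fin 1)) ∈ dbmZone (extraLU L1 U1 D1) := by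
  intro i j
  rcases i with _ | x <;> rcases j with _ | y <;>
    simp [extraLU, D1, entryGtB, negGtB, negUB, extendB, L1, U1, DBMEntry.sat, ext0]

lemma hLUpmem : (fun _ => 0 : Val (Fin 1)) ∈ dbmZone (extraLUp L1 U1 D1) := by
  intro i j
  rcases i with _ | x <;> rcases j with _ | y <;>
    simp [extraLUp, D1, entryGtB, negGtB, negUB, extendB, L1, U1, DBMEntry.sat, ext0]

end NLS

/-- `Extra_LU` is not lift-safe: for some automaton `A` (with derived
bounds `L`, `U`), some clock `x ∈ Lf(A)` and some zone `Z`, every valuation of `Z`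
satisfies `x ≥ 1` while some valuation of `Extra_LU(Z)` satisfies `x < 1`; the same
holds for `Extra⁺_LU`. -/
theorem extraLU_not_lift_safe :
    (∃ (A : TA (Fin 1) (Fin 1)) (L U : Fin 1 → ExtBound),
      IsLFun A L ∧ IsUFun A U ∧
      ∃ (Z : Set (Val (Fin 1))) (D : DBM (Fin 1)) (x : Fin 1),
        IsCanonicalDBM Z D ∧ x ∈ Lf A ∧
        (∀ v ∈ Z, 1 ≤ (v x : ℝ)) ∧ (∃ v ∈ dbmZone (extraLU L U D), (v x : ℝ) < 1)) ∧
    (∃ (A : TA (Fin 1) (Fin 1)) (L U : Fin 1 → ExtBound),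
      IsLFun A L ∧ IsUFun A U ∧
      ∃ (Z : Set (Val (Fin 1))) (D : DBM (Fin 1)) (x : Fin 1),
        IsCanonicalDBM Z D ∧ x ∈ Lf A ∧
        (∀ v ∈ Z, 1 ≤ (v x : ℝ)) ∧ (∃ v ∈ dbmZone (extraLUp L U D), (v x : ℝ) < 1)) := by
  constructor
  · exact ⟨NLS.A1, NLS.L1, NLS.U1, NLS.hLF, NLS.hUF, NLS.Z1, NLS.D1, 0,
      NLS.hcan, NLS.hLf, NLS.hge, ⟨fun _ => 0, NLS.hLUmem, by norm_num⟩⟩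
  · exact ⟨NLS.A1, NLS.L1, NLS.U1, NLS.hLF, NLS.hUF, NLS.Z1, NLS.D1, 0,
      NLS.hcan, NLS.hLf, NLS.hge, ⟨fun _ => 0, NLS.hLUpmem, by norm_num⟩⟩
end
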